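/- arXiv:1804.10304 — 5 statements merged into one kernel-verified Lean document; each statement's English description precedes it below -/
import Mathlib

section
/- Let B : A → A be a monad in K equipped with a 2-cell Δ : B → B∘B satisfying the bialgebra-type compatibility μ-followed-by-Δ equals (μ × μ)∘(id × τ_{B,B} × id)∘(Δ × Δ) and Δ∘η = η × η, where τ_{B,B} is a left and right monadic distributive law. If (X, τ_{B,X}, ν_X) and (Y, τ_{B,Y}, ν_Y) are left Tambara B-modules, then X∘Y is a left B-module with action (ν_X × ν_Y)∘(id_B × τ_{B,X} × id_Y)∘(Δ × id_X × id_Y) : B∘X∘Y → X∘Y. -/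
open CategoryTheory Bicategory

namespace Paper

variable {K : Type*} [Bicategory K]

/-- A monad in a bicategory. -/
structure Mnd (a : K) where
  E : a ⟶ a
  mul : E ≫ E ⟶ E
  unit : 𝟙 a ⟶ E
  assoc : (α_ E E E).inv ≫ mul ▷ E ≫ mul = E ◁ mul ≫ mul
  left_unit : (λ_ E).inv ≫ unit ▷ E ≫ mul = 𝟙 E
  right_unit : (ρ_ E).inv ≫ E ◁ unit ≫ mul = 𝟙 E

/-- A left module over a monad in a bicategory. -/
structure LMod {a : K} (B : Mnd a) {b : K} (M : a ⟶ b) where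
  act : B.E ≫ M ⟶ M
  assoc : (α_ B.E B.E M).inv ≫ B.mul ▷ M ≫ act = B.E ◁ act ≫ act
  unit : (λ_ M).inv ≫ B.unit ▷ M ≫ act = 𝟙 M

variable {a : K}

/-- Tensor (= horizontal composite) of two "unit elements". -/
def tunit {X Y : a ⟶ a} (u : 𝟙 a ⟶ X) (v : 𝟙 a ⟶ Y) : 𝟙 a ⟶ X ≫ Y :=
  (λ_ (𝟙 a)).inv ≫ u ▷ 𝟙 a ≫ X ◁ v

/-- Multiplication on a composite `X ≫ Y` built from multiplications on `X`, `Y`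
and a distributive law `d : Y ≫ X ⟶ X ≫ Y`. -/
def tmul {X Y : a ⟶ a} (mX : X ≫ X ⟶ X) (mY : Y ≫ Y ⟶ Y) (d : Y ≫ X ⟶ X ≫ Y) :
    (X ≫ Y) ≫ X ≫ Y ⟶ X ≫ Y :=
  (α_ X Y (X ≫ Y)).hom ≫ X ◁ ((α_ Y X Y).inv ≫ d ▷ Y ≫ (α_ X Y Y).hom) ≫
    (α_ X X (Y ≫ Y)).inv ≫ mX ▷ (Y ≫ Y) ≫ X ◁ mY

/-- Comultiplication on a composite `X ≫ Y`. -/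
def tcomul {X Y : a ⟶ a} (cX : X ⟶ X ≫ X) (cY : Y ⟶ Y ≫ Y) (d : X ≫ Y ⟶ Y ≫ X) :
    X ≫ Y ⟶ (X ≫ Y) ≫ X ≫ Y :=
  cX ▷ Y ≫ (α_ X X Y).hom ≫
    X ◁ (X ◁ cY ≫ (α_ X Y Y).inv ≫ d ▷ Y ≫ (α_ Y X Y).hom) ≫ (α_ X Y (X ≫ Y)).inv

/-- Extend distributive laws, moving `X` to the left across a composite `Y1 ≫ Y2`. -/
def dext {X Y1 Y2 : a ⟶ a} (d1 : Y1 ≫ X ⟶ X ≫ Y1) (d2 : Y2 ≫ X ⟶ X ≫ Y2) :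
    (Y1 ≫ Y2) ≫ X ⟶ X ≫ Y1 ≫ Y2 :=
  (α_ Y1 Y2 X).hom ≫ Y1 ◁ d2 ≫ (α_ Y1 X Y2).inv ≫ d1 ▷ Y2 ≫ (α_ X Y1 Y2).hom

/-- Extend distributive laws, moving `X` to the right across a composite `Y1 ≫ Y2`. -/
def dext' {X Y1 Y2 : a ⟶ a} (d1 : X ≫ Y1 ⟶ Y1 ≫ X) (d2 : X ≫ Y2 ⟶ Y2 ≫ X) :
    X ≫ Y1 ≫ Y2 ⟶ (Y1 ≫ Y2) ≫ X :=
  (α_ X Y1 Y2).inv ≫ d1 ▷ Y2 ≫ (α_ Y1 X Y2).hom ≫ Y1 ◁ d2 ≫ (α_ Y1 Y2 X).inv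

/-- Convolution product of `f g : 𝟙 a ⟶ T` with respect to a multiplication on `T`. -/
def conv {T : a ⟶ a} (m : T ≫ T ⟶ T) (f g : 𝟙 a ⟶ T) : 𝟙 a ⟶ T :=
  (λ_ (𝟙 a)).inv ≫ f ▷ 𝟙 a ≫ T ◁ g ≫ m

/-- Convolution product of `f g : T ⟶ 𝟙 a` with respect to a comultiplication on `T`. -/
def convC {T : a ⟶ a} (c : T ⟶ T ≫ T) (f g : T ⟶ 𝟙 a) : T ⟶ 𝟙 a :=
  c ≫ f ▷ T ≫ (λ_ T).hom ≫ g

/-- The multiplication on `E ≫ E ≫ E` built from `mul` and the distributive law `τ`. -/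
def mul3 {E : a ⟶ a} (mul : E ≫ E ⟶ E) (τ : E ≫ E ⟶ E ≫ E) :
    (E ≫ E ≫ E) ≫ E ≫ E ≫ E ⟶ E ≫ E ≫ E :=
  tmul mul (tmul mul mul τ) (dext τ τ)

/-- The multiplication on `E ≫ E ≫ E ≫ E`. -/
def mul4 {E : a ⟶ a} (mul : E ≫ E ⟶ E) (τ : E ≫ E ⟶ E ≫ E) :
    (E ≫ E ≫ E ≫ E) ≫ E ≫ E ≫ E ≫ E ⟶ E ≫ E ≫ E ≫ E :=
  tmul mul (mul3 mul τ) (dext τ (dext τ τ))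

/-- The comultiplication on `E ≫ E ≫ E`. -/
def comul3 {E : a ⟶ a} (comul : E ⟶ E ≫ E) (τ : E ≫ E ⟶ E ≫ E) :
    E ≫ E ≫ E ⟶ (E ≫ E ≫ E) ≫ E ≫ E ≫ E :=
  tcomul comul (tcomul comul comul τ) (dext' τ τ)

/-- The comultiplication on `E ≫ E ≫ E ≫ E`. -/
def comul4 {E : a ⟶ a} (comul : E ⟶ E ≫ E) (τ : E ≫ E ⟶ E ≫ E) :
    E ≫ E ≫ E ≫ E ⟶ (E ≫ E ≫ E ≫ E) ≫ E ≫ E ≫ E ≫ E :=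
  tcomul comul (comul3 comul τ) (dext' τ (dext' τ τ))

/-- "Action of `Q ≫ P` on `X ≫ Y`": `P` crosses `X` via `dPX`, then `Q` acts on `X`
and `P` acts on `Y`. -/
def actT {b : K} {P Q X : a ⟶ a} {Y : a ⟶ b}
    (dPX : P ≫ X ⟶ X ≫ P) (aQX : Q ≫ X ⟶ X) (aPY : P ≫ Y ⟶ Y) :
    (Q ≫ P) ≫ X ≫ Y ⟶ X ≫ Y :=
  (α_ Q P (X ≫ Y)).hom ≫ Q ◁ ((α_ P X Y).inv ≫ dPX ▷ Y ≫ (α_ X P Y).hom) ≫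
    (α_ Q X (P ≫ Y)).inv ≫ aQX ▷ (P ≫ Y) ≫ X ◁ aPY

/-- A left Tambara module over a monad `B` equipped with a distributive law
`τBB : B ≫ B ⟶ B ≫ B`: an object `(X, τ_{B,X})` of `Mnd(K)(B)` together with a left
`B`-action which is a morphism in `Mnd(K)(B)`. -/
structure TambMod {a : K} (B : Mnd a) (τBB : B.E ≫ B.E ⟶ B.E ≫ B.E) where
  X : a ⟶ a
  d : B.E ≫ X ⟶ X ≫ B.E
  act : B.E ≫ X ⟶ X
  d_mul : B.E ◁ d ≫ (α_ B.E X B.E).inv ≫ d ▷ B.E ≫ (α_ X B.E B.E).hom ≫ X ◁ B.mul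
      = (α_ B.E B.E X).inv ≫ B.mul ▷ X ≫ d
  d_unit : (λ_ X).inv ≫ B.unit ▷ X ≫ d = (ρ_ X).inv ≫ X ◁ B.unit
  act_assoc : (α_ B.E B.E X).inv ≫ B.mul ▷ X ≫ act = B.E ◁ act ≫ act
  act_unit : (λ_ X).inv ≫ B.unit ▷ X ≫ act = 𝟙 X
  /-- the action is a morphism in `Mnd(K)(B)`, i.e. `τ_{B,X}` is natural with
  respect to the left action -/
  d_act : B.E ◁ act ≫ d
      = (α_ B.E B.E X).inv ≫ τBB ▷ X ≫ (α_ B.E B.E X).hom ≫ B.E ◁ d ≫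
        (α_ B.E X B.E).inv ≫ act ▷ B.E

/-! `X ∘ Y` is a module over the composite `B ∘ B`, whose multiplication is `tmul μ μ τ_{B,B}`:
the first factor acts on `X` through `ν_X`, the second crosses `X` via `τ_{B,X}` and acts on `Y`
through `ν_Y`. These two actions satisfy the Beck-type compatibility with `τ_{B,B}`
because `ν_X` is a morphism in `Mnd(K)(B)`. The conditions on `Δ` say that `Δ : B → B ∘ B` is a
morphism of monads, and the diagonal action is the restriction of scalars along `Δ`. -/

section

variable {b : K}

def restrictScalars {E F : a ⟶ a} {M : a ⟶ b} (φ : E ⟶ F) (act : F ≫ M ⟶ M) : E ≫ M ⟶ M :=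
  φ ▷ M ≫ act

lemma restrictScalars_assoc {E F : a ⟶ a} {M : a ⟶ b} {m : E ≫ E ⟶ E} {mF : F ≫ F ⟶ F}
    {φ : E ⟶ F} {act : F ≫ M ⟶ M} (hφ : m ≫ φ = φ ▷ E ≫ F ◁ φ ≫ mF)
    (hact : (α_ F F M).inv ≫ mF ▷ M ≫ act = F ◁ act ≫ act) :
    (α_ E E M).inv ≫ m ▷ M ≫ restrictScalars φ act
      = E ◁ restrictScalars φ act ≫ restrictScalars φ act := by
  unfold restrictScalars
  calc _ = 𝟙 _ ⊗≫ (m ≫ φ) ▷ M ⊗≫ act := by bicategory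
    _ = 𝟙 _ ⊗≫ φ ▷ (E ≫ M) ⊗≫ F ◁ φ ▷ M ⊗≫ ((α_ F F M).inv ≫ mF ▷ M ≫ act) := by
        rw [hφ]; bicategory
    _ = 𝟙 _ ⊗≫ (φ ▷ (E ≫ M) ≫ F ◁ (φ ▷ M ≫ act)) ⊗≫ act := by rw [hact]; bicategory
    _ = _ := by rw [← whisker_exchange]; bicategory

lemma restrictScalars_unit {E F : a ⟶ a} {M : a ⟶ b} {u : 𝟙 a ⟶ E} {uF : 𝟙 a ⟶ F}
    {φ : E ⟶ F} {act : F ≫ M ⟶ M} (hφ : u ≫ φ = uF)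
    (hact : (λ_ M).inv ≫ uF ▷ M ≫ act = 𝟙 M) :
    (λ_ M).inv ≫ u ▷ M ≫ restrictScalars φ act = 𝟙 M := by
  rw [← hact, ← hφ, restrictScalars, comp_whiskerRight, Category.assoc]

def compAct {Q P : a ⟶ a} {M : a ⟶ b} (aQ : Q ≫ M ⟶ M) (aP : P ≫ M ⟶ M) :
    (Q ≫ P) ≫ M ⟶ M :=
  (α_ Q P M).hom ≫ Q ◁ aP ≫ aQ

lemma compAct_assoc {Q P : a ⟶ a} {M : a ⟶ b} {mQ : Q ≫ Q ⟶ Q} {mP : P ≫ P ⟶ P}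
    {t : P ≫ Q ⟶ Q ≫ P} {aQ : Q ≫ M ⟶ M} {aP : P ≫ M ⟶ M}
    (hQ : (α_ Q Q M).inv ≫ mQ ▷ M ≫ aQ = Q ◁ aQ ≫ aQ)
    (hP : (α_ P P M).inv ≫ mP ▷ M ≫ aP = P ◁ aP ≫ aP)
    (ht : P ◁ aQ ≫ aP = (α_ P Q M).inv ≫ t ▷ M ≫ compAct aQ aP) :
    (α_ (Q ≫ P) (Q ≫ P) M).inv ≫ tmul mQ mP t ▷ M ≫ compAct aQ aP
      = (Q ≫ P) ◁ compAct aQ aP ≫ compAct aQ aP := by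
  calc _ = 𝟙 _ ⊗≫ Q ◁ t ▷ (P ≫ M) ⊗≫ (mQ ▷ (P ≫ P ≫ M)
            ≫ Q ◁ ((α_ P P M).inv ≫ mP ▷ M ≫ aP)) ⊗≫ aQ := by
        unfold tmul compAct; bicategory
    _ = 𝟙 _ ⊗≫ Q ◁ t ▷ (P ≫ M) ⊗≫ (Q ≫ Q) ◁ (P ◁ aP ≫ aP)
          ⊗≫ ((α_ Q Q M).inv ≫ mQ ▷ M ≫ aQ) := by
        rw [← whisker_exchange mQ, hP]; bicategory
    _ = 𝟙 _ ⊗≫ Q ◁ (t ▷ (P ≫ M) ≫ (Q ≫ P) ◁ aP) ⊗≫ Q ◁ (Q ◁ aP ≫ aQ) ⊗≫ aQ := by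
        rw [hQ]; bicategory
    _ = 𝟙 _ ⊗≫ (Q ≫ P) ◁ Q ◁ aP ⊗≫ Q ◁ ((α_ P Q M).inv ≫ t ▷ M ≫ compAct aQ aP) ⊗≫ aQ := by
        rw [← whisker_exchange t aP]; unfold compAct; bicategory
    _ = _ := by rw [← ht]; unfold compAct; bicategory

lemma compAct_unit {Q P : a ⟶ a} {M : a ⟶ b} {uQ : 𝟙 a ⟶ Q} {uP : 𝟙 a ⟶ P}
    {aQ : Q ≫ M ⟶ M} {aP : P ≫ M ⟶ M}
    (hQ : (λ_ M).inv ≫ uQ ▷ M ≫ aQ = 𝟙 M) (hP : (λ_ M).inv ≫ uP ▷ M ≫ aP = 𝟙 M) :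
    (λ_ M).inv ≫ tunit uQ uP ▷ M ≫ compAct aQ aP = 𝟙 M := by
  calc _ = 𝟙 _ ⊗≫ uQ ▷ M ⊗≫ Q ◁ ((λ_ M).inv ≫ uP ▷ M ≫ aP) ⊗≫ aQ := by
        unfold tunit compAct; bicategory
    _ = (λ_ M).inv ≫ uQ ▷ M ≫ aQ := by rw [hP]; bicategory
    _ = 𝟙 M := hQ

def whiskerAct {Q X : a ⟶ a} (v : Q ≫ X ⟶ X) (Y : a ⟶ b) : Q ≫ X ≫ Y ⟶ X ≫ Y :=
  (α_ Q X Y).inv ≫ v ▷ Y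

lemma whiskerAct_assoc {Q X : a ⟶ a} {Y : a ⟶ b} {mQ : Q ≫ Q ⟶ Q} {v : Q ≫ X ⟶ X}
    (hv : (α_ Q Q X).inv ≫ mQ ▷ X ≫ v = Q ◁ v ≫ v) :
    (α_ Q Q (X ≫ Y)).inv ≫ mQ ▷ (X ≫ Y) ≫ whiskerAct v Y
      = Q ◁ whiskerAct v Y ≫ whiskerAct v Y := by
  unfold whiskerAct
  calc _ = 𝟙 _ ⊗≫ ((α_ Q Q X).inv ≫ mQ ▷ X ≫ v) ▷ Y := by bicategory
    _ = _ := by rw [hv]; bicategory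

lemma whiskerAct_unit {Q X : a ⟶ a} {Y : a ⟶ b} {uQ : 𝟙 a ⟶ Q} {v : Q ≫ X ⟶ X}
    (hv : (λ_ X).inv ≫ uQ ▷ X ≫ v = 𝟙 X) :
    (λ_ (X ≫ Y)).inv ≫ uQ ▷ (X ≫ Y) ≫ whiskerAct v Y = 𝟙 (X ≫ Y) := by
  unfold whiskerAct
  calc _ = 𝟙 _ ⊗≫ ((λ_ X).inv ≫ uQ ▷ X ≫ v) ▷ Y := by bicategory
    _ = _ := by rw [hv]; bicategory

def crossAct {P X : a ⟶ a} {Y : a ⟶ b} (d : P ≫ X ⟶ X ≫ P) (w : P ≫ Y ⟶ Y) :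
    P ≫ X ≫ Y ⟶ X ≫ Y :=
  (α_ P X Y).inv ≫ d ▷ Y ≫ (α_ X P Y).hom ≫ X ◁ w

lemma crossAct_assoc {P X : a ⟶ a} {Y : a ⟶ b} {mP : P ≫ P ⟶ P} {d : P ≫ X ⟶ X ≫ P}
    {w : P ≫ Y ⟶ Y}
    (hd : P ◁ d ≫ (α_ P X P).inv ≫ d ▷ P ≫ (α_ X P P).hom ≫ X ◁ mP
      = (α_ P P X).inv ≫ mP ▷ X ≫ d)
    (hw : (α_ P P Y).inv ≫ mP ▷ Y ≫ w = P ◁ w ≫ w) :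
    (α_ P P (X ≫ Y)).inv ≫ mP ▷ (X ≫ Y) ≫ crossAct d w
      = P ◁ crossAct d w ≫ crossAct d w := by
  unfold crossAct
  calc _ = 𝟙 _ ⊗≫ ((α_ P P X).inv ≫ mP ▷ X ≫ d) ▷ Y ⊗≫ X ◁ w := by bicategory
    _ = 𝟙 _ ⊗≫ P ◁ d ▷ Y ⊗≫ d ▷ (P ≫ Y) ⊗≫ X ◁ ((α_ P P Y).inv ≫ mP ▷ Y ≫ w) := by
        rw [← hd]; bicategory
    _ = 𝟙 _ ⊗≫ P ◁ d ▷ Y ⊗≫ (d ▷ (P ≫ Y) ≫ (X ≫ P) ◁ w) ⊗≫ X ◁ w := by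
        rw [hw]; bicategory
    _ = _ := by rw [← whisker_exchange]; bicategory

lemma crossAct_unit {P X : a ⟶ a} {Y : a ⟶ b} {uP : 𝟙 a ⟶ P} {d : P ≫ X ⟶ X ≫ P}
    {w : P ≫ Y ⟶ Y}
    (hd : (λ_ X).inv ≫ uP ▷ X ≫ d = (ρ_ X).inv ≫ X ◁ uP)
    (hw : (λ_ Y).inv ≫ uP ▷ Y ≫ w = 𝟙 Y) :
    (λ_ (X ≫ Y)).inv ≫ uP ▷ (X ≫ Y) ≫ crossAct d w = 𝟙 (X ≫ Y) := by
  unfold crossAct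
  calc _ = 𝟙 _ ⊗≫ ((λ_ X).inv ≫ uP ▷ X ≫ d) ▷ Y ⊗≫ X ◁ w := by bicategory
    _ = 𝟙 _ ⊗≫ X ◁ ((λ_ Y).inv ≫ uP ▷ Y ≫ w) := by rw [hd]; bicategory
    _ = _ := by rw [hw]; bicategory

lemma whiskerLeft_whiskerAct_comp_crossAct {P Q X : a ⟶ a} {Y : a ⟶ b}
    {t : P ≫ Q ⟶ Q ≫ P} {d : P ≫ X ⟶ X ≫ P} {v : Q ≫ X ⟶ X} (w : P ≫ Y ⟶ Y)
    (hd : P ◁ v ≫ d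
      = (α_ P Q X).inv ≫ t ▷ X ≫ (α_ Q P X).hom ≫ Q ◁ d ≫ (α_ Q X P).inv ≫ v ▷ P) :
    P ◁ whiskerAct v Y ≫ crossAct d w
      = (α_ P Q (X ≫ Y)).inv ≫ t ▷ (X ≫ Y) ≫ compAct (whiskerAct v Y) (crossAct d w) := by
  unfold whiskerAct crossAct compAct
  calc _ = 𝟙 _ ⊗≫ (P ◁ v ≫ d) ▷ Y ⊗≫ X ◁ w := by bicategory
    _ = 𝟙 _ ⊗≫ t ▷ (X ≫ Y) ⊗≫ Q ◁ d ▷ Y ⊗≫ (v ▷ (P ≫ Y) ≫ X ◁ w) := by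
        rw [hd]; bicategory
    _ = _ := by rw [← whisker_exchange]; bicategory

lemma actT_eq_compAct {P Q X : a ⟶ a} {Y : a ⟶ b}
    (d : P ≫ X ⟶ X ≫ P) (v : Q ≫ X ⟶ X) (w : P ≫ Y ⟶ Y) :
    actT d v w = compAct (whiskerAct v Y) (crossAct d w) := by
  unfold actT compAct whiskerAct crossAct
  calc _ = 𝟙 _ ⊗≫ Q ◁ d ▷ Y ⊗≫ (v ▷ (P ≫ Y) ≫ X ◁ w) := by bicategory
    _ = _ := by rw [← whisker_exchange]; bicategory

end

theorem tensor_of_tambara_modules_is_module_general {K : Type*} [Bicategory K]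
    {a : K} (B : Mnd a) (τBB : B.E ≫ B.E ⟶ B.E ≫ B.E)
    (comul : B.E ⟶ B.E ≫ B.E)
    (hcompat : B.mul ≫ comul
      = comul ▷ B.E ≫ (B.E ≫ B.E) ◁ comul ≫ tmul B.mul B.mul τBB)
    (hcu : B.unit ≫ comul = tunit B.unit B.unit)
    (P1 P2 : TambMod B τBB) :
    ∃ L : LMod B (P1.X ≫ P2.X),
      L.act = comul ▷ (P1.X ≫ P2.X) ≫ actT P1.d P1.act P2.act := by
  have hassoc := compAct_assoc (whiskerAct_assoc P1.act_assoc)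
    (crossAct_assoc P1.d_mul P2.act_assoc) (whiskerLeft_whiskerAct_comp_crossAct P2.act P1.d_act)
  have hunit := compAct_unit (whiskerAct_unit P1.act_unit) (crossAct_unit P1.d_unit P2.act_unit)
  rw [← actT_eq_compAct] at hassoc hunit
  exact ⟨⟨restrictScalars comul _, restrictScalars_assoc hcompat hassoc,
    restrictScalars_unit hcu hunit⟩, rfl⟩

/-- Let `B` be a monad with a comultiplication-type 2-cell
`Δ : B ⟶ B ≫ B` compatible with the multiplication through the (left and right
monadic) distributive law `τBB`, and with the unit.  If `(X, τ_{B,X})` and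
`(Y, τ_{B,Y})` are left Tambara `B`-modules, then `X ∘ Y` is a left `B`-module with
the diagonal action through `Δ`. -/
theorem tensor_of_tambara_modules_is_module {K : Type*} [Bicategory K]
    [Bicategory.Strict K] {a : K} (B : Mnd a) (τBB : B.E ≫ B.E ⟶ B.E ≫ B.E)
    (hlm : B.E ◁ τBB ≫ (α_ B.E B.E B.E).inv ≫ τBB ▷ B.E ≫ (α_ B.E B.E B.E).hom ≫
        B.E ◁ B.mul = (α_ B.E B.E B.E).inv ≫ B.mul ▷ B.E ≫ τBB)
    (hlu : (λ_ B.E).inv ≫ B.unit ▷ B.E ≫ τBB = (ρ_ B.E).inv ≫ B.E ◁ B.unit)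
    (hrm : τBB ▷ B.E ≫ (α_ B.E B.E B.E).hom ≫ B.E ◁ τBB ≫ (α_ B.E B.E B.E).inv ≫
        B.mul ▷ B.E = (α_ B.E B.E B.E).hom ≫ B.E ◁ B.mul ≫ τBB)
    (hru : (ρ_ B.E).inv ≫ B.E ◁ B.unit ≫ τBB = (λ_ B.E).inv ≫ B.unit ▷ B.E)
    (comul : B.E ⟶ B.E ≫ B.E)
    (hcompat : B.mul ≫ comul
      = comul ▷ B.E ≫ (B.E ≫ B.E) ◁ comul ≫ tmul B.mul B.mul τBB)
    (hcu : B.unit ≫ comul = tunit B.unit B.unit)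
    (P1 P2 : TambMod B τBB) :
    ∃ L : LMod B (P1.X ≫ P2.X),
      L.act = comul ▷ (P1.X ≫ P2.X) ≫ actT P1.d P1.act P2.act :=
  tensor_of_tambara_modules_is_module_general B τBB comul hcompat hcu P1 P2

end Paper
end

section
/- Let (F, ω) be a coquasi-bimonad and B : A → A a right F-module monad in a 2-category K, with ψ_{B,F} : B∘F → F∘B defined by (id_F × (right F-action on B))∘(τ_{B,F} × id_F)∘(id_B × Δ). Let (X, ρ_X) be a right F-comodule equipped with a distributive law τ_{B,X} : B∘X → X∘B such that the coaction ρ_X : (X,τ_{B,X}) → (X∘F, τ_{B,XF}) is a morphism in Mnd(K)(B). Then (X, ψ_{B,X}) is an object of Mnd(K)(B), where ψ_{B,X} = (id_X × (right F-action on B))∘(τ_{B,X} × id_F)∘(id_B × ρ_X). -/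
open CategoryTheory Bicategory

namespace Paper

variable {K : Type*} [Bicategory K]

/-- A comonad in a bicategory. -/
structure Cmnd (a : K) where
  E : a ⟶ a
  comul : E ⟶ E ≫ E
  counit : E ⟶ 𝟙 a
  coassoc : comul ≫ comul ▷ E ≫ (α_ E E E).hom = comul ≫ E ◁ comul
  left_counit : comul ≫ counit ▷ E ≫ (λ_ E).hom = 𝟙 E
  right_counit : comul ≫ E ◁ counit ≫ (ρ_ E).hom = 𝟙 E

variable {a : K}

/-- An (endo) 1-cell in `Mnd(K)` over the monad `B`: an object of `Mnd(K)(B)`,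
i.e. a 1-cell together with a monadic distributive law. -/
structure MndHom {a : K} (B : Mnd a) (X : a ⟶ a) where
  d : B.E ≫ X ⟶ X ≫ B.E
  mul_law : B.E ◁ d ≫ (α_ B.E X B.E).inv ≫ d ▷ B.E ≫ (α_ X B.E B.E).hom ≫ X ◁ B.mul
      = (α_ B.E B.E X).inv ≫ B.mul ▷ X ≫ d
  unit_law : (λ_ X).inv ≫ B.unit ▷ X ≫ d = (ρ_ X).inv ≫ X ◁ B.unit

/-- A coquasi-bimonad `(A, F, μ, η, Δ, ε, τ_{F,F}, ω)` in a 2-category, together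
with the condition that `τ_{F,Id_A}` is natural with respect to `ω`. -/
structure CoquasiBimonad (a : K) extends Cmnd a where
  mul : E ≫ E ⟶ E
  unit : 𝟙 a ⟶ E
  mul_assoc : (α_ E E E).inv ≫ mul ▷ E ≫ mul = E ◁ mul ≫ mul
  mul_left_unit : (λ_ E).inv ≫ unit ▷ E ≫ mul = 𝟙 E
  mul_right_unit : (ρ_ E).inv ≫ E ◁ unit ≫ mul = 𝟙 E
  τ : E ≫ E ⟶ E ≫ E
  /-- `τ` is a left monadic distributive law -/
  τ_lm : E ◁ τ ≫ (α_ E E E).inv ≫ τ ▷ E ≫ (α_ E E E).hom ≫ E ◁ mul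
      = (α_ E E E).inv ≫ mul ▷ E ≫ τ
  τ_lm_unit : (λ_ E).inv ≫ unit ▷ E ≫ τ = (ρ_ E).inv ≫ E ◁ unit
  /-- `τ` is a right monadic distributive law -/
  τ_rm : τ ▷ E ≫ (α_ E E E).hom ≫ E ◁ τ ≫ (α_ E E E).inv ≫ mul ▷ E
      = (α_ E E E).hom ≫ E ◁ mul ≫ τ
  τ_rm_unit : (ρ_ E).inv ≫ E ◁ unit ≫ τ = (λ_ E).inv ≫ unit ▷ E
  /-- `τ` is a left comonadic distributive law -/
  τ_lc : comul ▷ E ≫ (α_ E E E).hom ≫ E ◁ τ ≫ (α_ E E E).inv ≫ τ ▷ E ≫ (α_ E E E).hom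
      = τ ≫ E ◁ comul
  τ_lc_counit : τ ≫ counit ▷ E ≫ (λ_ E).hom = E ◁ counit ≫ (ρ_ E).hom
  /-- `τ` is a right comonadic distributive law -/
  τ_rc : E ◁ comul ≫ (α_ E E E).inv ≫ τ ▷ E ≫ (α_ E E E).hom ≫ E ◁ τ
      = τ ≫ comul ▷ E ≫ (α_ E E E).hom
  τ_rc_counit : τ ≫ E ◁ counit ≫ (ρ_ E).hom = counit ▷ E ≫ (λ_ E).hom
  /-- bialgebra-type compatibility of `mul` and `comul` through `τ` -/
  mul_comul : mul ≫ comul = comul ▷ E ≫ (E ≫ E) ◁ comul ≫ tmul mul mul τ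
  comul_unit : unit ≫ comul = tunit unit unit
  counit_mul : mul ≫ counit = E ◁ counit ≫ (ρ_ E).hom ≫ counit
  counit_unit : unit ≫ counit = 𝟙 (𝟙 a)
  /-- the coassociator `ω` -/
  ω : E ≫ E ≫ E ⟶ 𝟙 a
  /-- `ω` is normalized -/
  ω_normal : E ◁ ((λ_ E).inv ≫ unit ▷ E) ≫ ω = E ◁ counit ≫ (ρ_ E).hom ≫ counit
  /-- `ω` is convolution invertible -/
  ω_inv : ∃ ω' : E ≫ E ≫ E ⟶ 𝟙 a,
      convC (comul3 comul τ) ω ω'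
        = E ◁ (E ◁ counit ≫ (ρ_ E).hom ≫ counit) ≫ (ρ_ E).hom ≫ counit ∧
      convC (comul3 comul τ) ω' ω
        = E ◁ (E ◁ counit ≫ (ρ_ E).hom ≫ counit) ≫ (ρ_ E).hom ≫ counit
  /-- quasi-associativity of `mul` governed by `ω` -/
  quasi_assoc :
      comul3 comul τ ≫ ω ▷ (E ≫ E ≫ E) ≫ (λ_ (E ≫ E ≫ E)).hom ≫ E ◁ mul ≫ mul
      = comul3 comul τ ≫ (E ≫ E ≫ E) ◁ ω ≫ (ρ_ (E ≫ E ≫ E)).hom ≫ E ◁ mul ≫ mul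
  /-- the dual 3-cocycle condition for `ω` -/
  cocycle :
      convC (comul4 comul τ)
        (convC (comul4 comul τ)
          (counit ▷ (E ≫ E ≫ E) ≫ (λ_ (E ≫ E ≫ E)).hom ≫ ω)
          (E ◁ ((α_ E E E).inv ≫ mul ▷ E) ≫ ω))
        (E ◁ (E ◁ (E ◁ counit ≫ (ρ_ E).hom)) ≫ ω)
      = convC (comul4 comul τ) (E ◁ (E ◁ mul) ≫ ω)
          ((α_ E E (E ≫ E)).inv ≫ mul ▷ (E ≫ E) ≫ ω)
  /-- `τ_{F,Id_A}` is natural with respect to `ω` -/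
  ω_nat : E ◁ ω ≫ (ρ_ E).hom = dext' τ (dext' τ τ) ≫ ω ▷ E ≫ (λ_ E).hom

section CoactionCrossing

variable {B F X : a ⟶ a}

/-- The paper's `ψ_{B,X}`; for `X = F` and `ρ = Δ` it is `ψ_{B,F}`. -/
def coactCrossing (τ : B ≫ X ⟶ X ≫ B) (ρ : X ⟶ X ≫ F) (r : B ≫ F ⟶ B) : B ≫ X ⟶ X ≫ B :=
  B ◁ ρ ≫ (α_ B X F).inv ≫ τ ▷ F ≫ (α_ X B F).hom ≫ X ◁ r

/-- The two coactions are merged by coassociativity, and `τ_{B,F}` appears because `ρ` is a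
morphism of distributive laws. -/
theorem whiskerLeft_coactCrossing_comp_whiskerRight {τ : B ≫ X ⟶ X ≫ B} {ρ : X ⟶ X ≫ F}
    {r : B ≫ F ⟶ B} {comul : F ⟶ F ≫ F} {τBF : B ≫ F ⟶ F ≫ B}
    (hρ_coassoc : ρ ≫ X ◁ comul = ρ ≫ ρ ▷ F ≫ (α_ X F F).hom)
    (hρ_mor : τ ≫ ρ ▷ B ≫ (α_ X F B).hom
      = B ◁ ρ ≫ (α_ B X F).inv ≫ τ ▷ F ≫ (α_ X B F).hom ≫ X ◁ τBF) :
    B ◁ coactCrossing τ ρ r ≫ (α_ B X B).inv ≫ coactCrossing τ ρ r ▷ B ≫ (α_ X B B).hom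
      = B ◁ B ◁ ρ ⊗≫ (B ◁ τ ⊗≫ τ ▷ B) ▷ F ⊗≫
          X ◁ (B ◁ coactCrossing τBF comul r ⊗≫ r ▷ B) := by
  unfold coactCrossing
  calc
    _ = B ◁ B ◁ ρ ⊗≫ B ◁ (τ ▷ F) ⊗≫ B ◁ (X ◁ r ≫ ρ ▷ B) ⊗≫ (τ ▷ F) ▷ B ⊗≫
          X ◁ (r ▷ B) := by bicategory
    _ = B ◁ B ◁ ρ ⊗≫ B ◁ (τ ▷ F) ⊗≫ B ◁ (ρ ▷ (B ≫ F)) ⊗≫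
          ((B ≫ X) ◁ (F ◁ r) ≫ τ ▷ (F ≫ B)) ⊗≫ X ◁ (r ▷ B) := by
        rw [whisker_exchange ρ r]; bicategory
    _ = B ◁ B ◁ ρ ⊗≫ B ◁ ((τ ≫ ρ ▷ B ≫ (α_ X F B).hom) ▷ F) ⊗≫ τ ▷ (F ≫ B ≫ F) ⊗≫
          (X ≫ B) ◁ (F ◁ r) ⊗≫ X ◁ (r ▷ B) := by
        rw [whisker_exchange τ (F ◁ r)]; bicategory
    _ = B ◁ B ◁ (ρ ≫ ρ ▷ F ≫ (α_ X F F).hom) ⊗≫ B ◁ ((τ ▷ F) ▷ F) ⊗≫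
          ((B ≫ X) ◁ (τBF ▷ F) ≫ τ ▷ ((F ≫ B) ≫ F)) ⊗≫ (X ≫ B) ◁ (F ◁ r) ⊗≫
          X ◁ (r ▷ B) := by
        rw [hρ_mor]; bicategory
    _ = B ◁ B ◁ ρ ⊗≫ ((B ≫ B ≫ X) ◁ comul ≫ (B ◁ τ ⊗≫ τ ▷ B) ▷ (F ≫ F)) ⊗≫
          (X ≫ B) ◁ (τBF ▷ F) ⊗≫ (X ≫ B) ◁ (F ◁ r) ⊗≫ X ◁ (r ▷ B) := by
        rw [← hρ_coassoc, whisker_exchange τ (τBF ▷ F)]; bicategory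
    _ = _ := by
        rw [whisker_exchange (B ◁ τ ⊗≫ τ ▷ B) comul]; bicategory

theorem coactCrossing_mul_law {m : B ≫ B ⟶ B} {τ : B ≫ X ⟶ X ≫ B} {ρ : X ⟶ X ≫ F}
    {r : B ≫ F ⟶ B} {comul : F ⟶ F ≫ F} {τBF : B ≫ F ⟶ F ≫ B}
    (hr_mul : B ◁ coactCrossing τBF comul r ≫ (α_ B F B).inv ≫ r ▷ B ≫ m
      = (α_ B B F).inv ≫ m ▷ F ≫ r)
    (hρ_coassoc : ρ ≫ X ◁ comul = ρ ≫ ρ ▷ F ≫ (α_ X F F).hom)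
    (hτ_mul : B ◁ τ ≫ (α_ B X B).inv ≫ τ ▷ B ≫ (α_ X B B).hom ≫ X ◁ m
      = (α_ B B X).inv ≫ m ▷ X ≫ τ)
    (hρ_mor : τ ≫ ρ ▷ B ≫ (α_ X F B).hom
      = B ◁ ρ ≫ (α_ B X F).inv ≫ τ ▷ F ≫ (α_ X B F).hom ≫ X ◁ τBF) :
    B ◁ coactCrossing τ ρ r ≫ (α_ B X B).inv ≫ coactCrossing τ ρ r ▷ B ≫
        (α_ X B B).hom ≫ X ◁ m
      = (α_ B B X).inv ≫ m ▷ X ≫ coactCrossing τ ρ r := by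
  rw [reassoc_of% whiskerLeft_coactCrossing_comp_whiskerRight hρ_coassoc hρ_mor]
  calc
    _ = B ◁ B ◁ ρ ⊗≫ (B ◁ τ ⊗≫ τ ▷ B) ▷ F ⊗≫
          X ◁ (B ◁ coactCrossing τBF comul r ≫ (α_ B F B).inv ≫ r ▷ B ≫ m) := by
        bicategory
    _ = B ◁ B ◁ ρ ⊗≫ (B ◁ τ ≫ (α_ B X B).inv ≫ τ ▷ B ≫ (α_ X B B).hom ≫ X ◁ m) ▷ F ⊗≫
          X ◁ r := by
        rw [hr_mul]; bicategory
    _ = (α_ B B X).inv ≫ ((B ≫ B) ◁ ρ ≫ m ▷ (X ≫ F)) ⊗≫ τ ▷ F ⊗≫ X ◁ r := by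
        rw [hτ_mul]; bicategory
    _ = _ := by
        rw [whisker_exchange m ρ]; unfold coactCrossing; bicategory

theorem coactCrossing_unit_law {u : 𝟙 a ⟶ B} {counit : F ⟶ 𝟙 a} {τ : B ≫ X ⟶ X ≫ B}
    {ρ : X ⟶ X ≫ F} {r : B ≫ F ⟶ B}
    (hr_unit : (λ_ F).inv ≫ u ▷ F ≫ r = counit ≫ u)
    (hρ_counit : ρ ≫ X ◁ counit ≫ (ρ_ X).hom = 𝟙 X)
    (hτ_unit : (λ_ X).inv ≫ u ▷ X ≫ τ = (ρ_ X).inv ≫ X ◁ u) :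
    (λ_ X).inv ≫ u ▷ X ≫ coactCrossing τ ρ r = (ρ_ X).inv ≫ X ◁ u := by
  unfold coactCrossing
  calc
    _ = (λ_ X).inv ≫ (u ▷ X ≫ B ◁ ρ) ⊗≫ τ ▷ F ⊗≫ X ◁ r := by bicategory
    _ = ρ ⊗≫ ((λ_ X).inv ≫ u ▷ X ≫ τ) ▷ F ⊗≫ X ◁ r := by
        rw [← whisker_exchange u ρ]; bicategory
    _ = ρ ⊗≫ X ◁ ((λ_ F).inv ≫ u ▷ F ≫ r) := by
        rw [hτ_unit]; bicategory
    _ = (ρ ≫ X ◁ counit ≫ (ρ_ X).hom) ≫ (ρ_ X).inv ≫ X ◁ u := by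
        rw [hr_unit]; bicategory
    _ = _ := by
        rw [hρ_counit, Category.id_comp]

end CoactionCrossing

theorem comodule_gives_mnd_object_general {K : Type*} [Bicategory K]
    {a : K} (Q : CoquasiBimonad a) (B : Mnd a)
    (τBF : B.E ≫ Q.E ⟶ Q.E ≫ B.E)
    -- `B` is a right `F`-module monad via `rAct` (`F` measures `B`), where the
    (rAct : B.E ≫ Q.E ⟶ B.E)
    (hMM : B.E ◁ (B.E ◁ Q.comul ≫ (α_ B.E Q.E Q.E).inv ≫ τBF ▷ Q.E ≫
          (α_ Q.E B.E Q.E).hom ≫ Q.E ◁ rAct) ≫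
        (α_ B.E Q.E B.E).inv ≫ rAct ▷ B.E ≫ B.mul
      = (α_ B.E B.E Q.E).inv ≫ B.mul ▷ Q.E ≫ rAct)
    (hMM_unit : (λ_ Q.E).inv ≫ B.unit ▷ Q.E ≫ rAct = Q.counit ≫ B.unit)
    -- `(X, ρc)` is a right `F`-comodule
    (X : a ⟶ a) (ρc : X ⟶ X ≫ Q.E)
    (hρ_coassoc : ρc ≫ X ◁ Q.comul = ρc ≫ ρc ▷ Q.E ≫ (α_ X Q.E Q.E).hom)
    (hρ_counit : ρc ≫ X ◁ Q.counit ≫ (ρ_ X).hom = 𝟙 X)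
    -- `(X, τ_{B,X})` is an object of `Mnd(K)(B)` and `ρc` is a morphism
    -- `(X, τ_{B,X}) ⟶ (X ∘ F, τ_{B,XF})` in `Mnd(K)(B)`
    (τBX : B.E ≫ X ⟶ X ≫ B.E)
    (hτBX_mul : B.E ◁ τBX ≫ (α_ B.E X B.E).inv ≫ τBX ▷ B.E ≫
        (α_ X B.E B.E).hom ≫ X ◁ B.mul
      = (α_ B.E B.E X).inv ≫ B.mul ▷ X ≫ τBX)
    (hτBX_unit : (λ_ X).inv ≫ B.unit ▷ X ≫ τBX = (ρ_ X).inv ≫ X ◁ B.unit)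
    (hρ_mor : τBX ≫ ρc ▷ B.E ≫ (α_ X Q.E B.E).hom
      = B.E ◁ ρc ≫ (α_ B.E X Q.E).inv ≫ τBX ▷ Q.E ≫ (α_ X B.E Q.E).hom ≫
          X ◁ τBF) :
    ∃ h : MndHom B X,
      h.d = B.E ◁ ρc ≫ (α_ B.E X Q.E).inv ≫ τBX ▷ Q.E ≫ (α_ X B.E Q.E).hom ≫
        X ◁ rAct := by
  refine ⟨⟨coactCrossing τBX ρc rAct, ?_, ?_⟩, rfl⟩
  · exact coactCrossing_mul_law hMM hρ_coassoc hτBX_mul hρ_mor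
  · exact coactCrossing_unit_law hMM_unit hρ_counit hτBX_unit

/-- Let `(F, ω)` be a coquasi-bimonad and `B` a right `F`-module
monad in `K`, with `ψ_{B,F} = (id_F × r) ∘ (τ_{B,F} × id_F) ∘ (id_B × Δ)` where `r`
is the right `F`-action on `B`.  If `(X, ρ)` is a right `F`-comodule with a
distributive law `τ_{B,X}` making the coaction `ρ` a morphism in `Mnd(K)(B)`, then
`(X, ψ_{B,X})` is an object of `Mnd(K)(B)`, where
`ψ_{B,X} = (id_X × r) ∘ (τ_{B,X} × id_F) ∘ (id_B × ρ)`. -/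
theorem comodule_gives_mnd_object {K : Type*} [Bicategory K] [Bicategory.Strict K]
    {a : K} (Q : CoquasiBimonad a) (B : Mnd a)
    -- `(F, τ_{B,F})` is an object of `Mnd(K)(B)`
    (τBF : B.E ≫ Q.E ⟶ Q.E ≫ B.E)
    (hτBF_mul : B.E ◁ τBF ≫ (α_ B.E Q.E B.E).inv ≫ τBF ▷ B.E ≫
        (α_ Q.E B.E B.E).hom ≫ Q.E ◁ B.mul
      = (α_ B.E B.E Q.E).inv ≫ B.mul ▷ Q.E ≫ τBF)
    (hτBF_unit : (λ_ Q.E).inv ≫ B.unit ▷ Q.E ≫ τBF = (ρ_ Q.E).inv ≫ Q.E ◁ B.unit)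
    -- `B` is a right `F`-module monad via `rAct` (`F` measures `B`), where the
    (rAct : B.E ≫ Q.E ⟶ B.E)
    (hMM : B.E ◁ (B.E ◁ Q.comul ≫ (α_ B.E Q.E Q.E).inv ≫ τBF ▷ Q.E ≫
          (α_ Q.E B.E Q.E).hom ≫ Q.E ◁ rAct) ≫
        (α_ B.E Q.E B.E).inv ≫ rAct ▷ B.E ≫ B.mul
      = (α_ B.E B.E Q.E).inv ≫ B.mul ▷ Q.E ≫ rAct)
    (hMM_unit : (λ_ Q.E).inv ≫ B.unit ▷ Q.E ≫ rAct = Q.counit ≫ B.unit)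
    -- `(X, ρc)` is a right `F`-comodule
    (X : a ⟶ a) (ρc : X ⟶ X ≫ Q.E)
    (hρ_coassoc : ρc ≫ X ◁ Q.comul = ρc ≫ ρc ▷ Q.E ≫ (α_ X Q.E Q.E).hom)
    (hρ_counit : ρc ≫ X ◁ Q.counit ≫ (ρ_ X).hom = 𝟙 X)
    -- `(X, τ_{B,X})` is an object of `Mnd(K)(B)` and `ρc` is a morphism
    -- `(X, τ_{B,X}) ⟶ (X ∘ F, τ_{B,XF})` in `Mnd(K)(B)`
    (τBX : B.E ≫ X ⟶ X ≫ B.E)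
    (hτBX_mul : B.E ◁ τBX ≫ (α_ B.E X B.E).inv ≫ τBX ▷ B.E ≫
        (α_ X B.E B.E).hom ≫ X ◁ B.mul
      = (α_ B.E B.E X).inv ≫ B.mul ▷ X ≫ τBX)
    (hτBX_unit : (λ_ X).inv ≫ B.unit ▷ X ≫ τBX = (ρ_ X).inv ≫ X ◁ B.unit)
    (hρ_mor : τBX ≫ ρc ▷ B.E ≫ (α_ X Q.E B.E).hom
      = B.E ◁ ρc ≫ (α_ B.E X Q.E).inv ≫ τBX ▷ Q.E ≫ (α_ X B.E Q.E).hom ≫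
          X ◁ τBF) :
    ∃ h : MndHom B X,
      h.d = B.E ◁ ρc ≫ (α_ B.E X Q.E).inv ≫ τBX ▷ Q.E ≫ (α_ X B.E Q.E).hom ≫
        X ◁ rAct :=
  comodule_gives_mnd_object_general Q B τBF rAct hMM hMM_unit X ρc hρ_coassoc hρ_counit τBX hτBX_mul
    hτBX_unit hρ_mor

end Paper
end

section
/- Let (A, F, λ) be a bimonad in a 2-category K. If (X, ψ_X, φ_X) and (Y, ψ_Y, φ_Y) are strong Yetter–Drinfel'd modules over F (i.e. 1-endocells over F in Bimnd(K)), then their composite X∘Y, with ψ_{XY} and φ_{XY} defined by stacking the respective distributive laws, is again a strong Yetter–Drinfel'd module; consequently the category of strong Yetter–Drinfel'd modules ^F_F YD_s(K,A) = Bimnd(K)(F) is a (strict) monoidal category. -/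
open CategoryTheory Bicategory

namespace Paper

variable {K : Type*} [Bicategory K]

variable {a : K}

/-- A (left) bimonad in a 2-category: a monad and a comonad structure on the same
1-cell, compatible through a 2-cell `lam : F ≫ F ⟶ F ≫ F` which is a 1-cell-datum
both in `Mnd(K)` and in `Comnd(K)`. -/
structure Bimonad (a : K) extends Mnd a where
  comul : E ⟶ E ≫ E
  counit : E ⟶ 𝟙 a
  coassoc : comul ≫ comul ▷ E ≫ (α_ E E E).hom = comul ≫ E ◁ comul
  left_counit : comul ≫ counit ▷ E ≫ (λ_ E).hom = 𝟙 E
  right_counit : comul ≫ E ◁ counit ≫ (ρ_ E).hom = 𝟙 E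
  lam : E ≫ E ⟶ E ≫ E
  /-- `(F, lam)` is a 1-cell datum in `Mnd(K)` -/
  lam_mul : E ◁ lam ≫ (α_ E E E).inv ≫ lam ▷ E ≫ (α_ E E E).hom ≫ E ◁ mul
      = (α_ E E E).inv ≫ mul ▷ E ≫ lam
  lam_unit : (λ_ E).inv ≫ unit ▷ E ≫ lam = (ρ_ E).inv ≫ E ◁ unit
  /-- `(F, lam)` is a 1-cell datum in `Comnd(K)` -/
  lam_comul : E ◁ comul ≫ (α_ E E E).inv ≫ lam ▷ E ≫ (α_ E E E).hom ≫ E ◁ lam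
      = lam ≫ comul ▷ E ≫ (α_ E E E).hom
  lam_counit : lam ≫ counit ▷ E ≫ (λ_ E).hom = E ◁ counit ≫ (ρ_ E).hom
  /-- compatibility of `mul` and `comul` through `lam` -/
  mul_comul : mul ≫ comul
      = E ◁ comul ≫ (α_ E E E).inv ≫ lam ▷ E ≫ (α_ E E E).hom ≫ E ◁ mul
  counit_mul : mul ≫ counit = E ◁ counit ≫ (ρ_ E).hom ≫ counit
  comul_unit : unit ≫ comul = (λ_ (𝟙 a)).inv ≫ unit ▷ 𝟙 a ≫ E ◁ unit
  counit_unit : unit ≫ counit = 𝟙 (𝟙 a)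

/-- The data of a (strong) Yetter–Drinfel'd module over a bimonad `F`:
a 1-cell `X` with 2-cells `ψ : F ≫ X ⟶ X ≫ F` and `φ : X ≫ F ⟶ F ≫ X`. -/
structure YDData {a : K} (F : Bimonad a) where
  X : a ⟶ a
  ψ : F.E ≫ X ⟶ X ≫ F.E
  φ : X ≫ F.E ⟶ F.E ≫ X

/-- The axioms of a strong Yetter–Drinfel'd module: `(X, ψ)` is a 1-cell datum in
`Mnd(K)`, `(X, φ)` is a 1-cell datum in `Comnd(K)`, and the three-strand
compatibility between `ψ`, `lam` and `φ` holds. -/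
def IsYDs {a : K} (F : Bimonad a) (M : YDData F) : Prop :=
  (F.E ◁ M.ψ ≫ (α_ F.E M.X F.E).inv ≫ M.ψ ▷ F.E ≫ (α_ M.X F.E F.E).hom ≫
      M.X ◁ F.mul = (α_ F.E F.E M.X).inv ≫ F.mul ▷ M.X ≫ M.ψ) ∧
  ((λ_ M.X).inv ≫ F.unit ▷ M.X ≫ M.ψ = (ρ_ M.X).inv ≫ M.X ◁ F.unit) ∧
  (M.X ◁ F.comul ≫ (α_ M.X F.E F.E).inv ≫ M.φ ▷ F.E ≫ (α_ F.E M.X F.E).hom ≫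
      F.E ◁ M.φ = M.φ ≫ F.comul ▷ M.X ≫ (α_ F.E F.E M.X).hom) ∧
  (M.φ ≫ F.counit ▷ M.X ≫ (λ_ M.X).hom = M.X ◁ F.counit ≫ (ρ_ M.X).hom) ∧
  (M.ψ ▷ F.E ≫ (α_ M.X F.E F.E).hom ≫ M.X ◁ F.lam ≫ (α_ M.X F.E F.E).inv ≫
      M.φ ▷ F.E
    = (α_ F.E M.X F.E).hom ≫ F.E ◁ M.φ ≫ (α_ F.E F.E M.X).inv ≫ F.lam ▷ M.X ≫
        (α_ F.E F.E M.X).hom ≫ F.E ◁ M.ψ ≫ (α_ F.E M.X F.E).inv)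

/-- Morphisms of (strong) Yetter–Drinfel'd modules: 2-cells which are
simultaneously 2-cells in `Mnd(K)` and in `Comnd(K)`. -/
def IsYDHom {a : K} (F : Bimonad a) (M N : YDData F) (f : M.X ⟶ N.X) : Prop :=
  (M.ψ ≫ f ▷ F.E = F.E ◁ f ≫ N.ψ) ∧ (M.φ ≫ F.E ◁ f = f ▷ F.E ≫ N.φ)

/-- The tensor product (= horizontal composite) of two Yetter–Drinfel'd modules. -/
def ydTensor {a : K} (F : Bimonad a) (M N : YDData F) : YDData F where
  X := M.X ≫ N.X
  ψ := dext' M.ψ N.ψ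
  φ := dext M.φ N.φ

/-- The unit Yetter–Drinfel'd module. -/
def ydUnit {a : K} (F : Bimonad a) : YDData F where
  X := 𝟙 a
  ψ := (ρ_ F.E).hom ≫ (λ_ F.E).inv
  φ := (λ_ F.E).hom ≫ (ρ_ F.E).inv

/-!
Each axiom for the stacked laws `dext' ψX ψY` and `dext φX φY` on `X ≫ Y` is the axiom for
`Y` whiskered by `X`, followed by the axiom for `X` whiskered by `Y`; in between, crossings on
disjoint strands are slid past each other with the interchange law. The unit module and the
coherence 2-cells satisfy their conditions by bicategorical coherence alone.
-/

section DistributiveLaws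

variable {E X Y : a ⟶ a}

def MulCompat (mul : E ≫ E ⟶ E) (ψ : E ≫ X ⟶ X ≫ E) : Prop :=
  E ◁ ψ ≫ (α_ E X E).inv ≫ ψ ▷ E ≫ (α_ X E E).hom ≫ X ◁ mul = (α_ E E X).inv ≫ mul ▷ X ≫ ψ

def UnitCompat (unit : 𝟙 a ⟶ E) (ψ : E ≫ X ⟶ X ≫ E) : Prop :=
  (λ_ X).inv ≫ unit ▷ X ≫ ψ = (ρ_ X).inv ≫ X ◁ unit

def ComulCompat (comul : E ⟶ E ≫ E) (φ : X ≫ E ⟶ E ≫ X) : Prop :=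
  X ◁ comul ≫ (α_ X E E).inv ≫ φ ▷ E ≫ (α_ E X E).hom ≫ E ◁ φ = φ ≫ comul ▷ X ≫ (α_ E E X).hom

def CounitCompat (counit : E ⟶ 𝟙 a) (φ : X ≫ E ⟶ E ≫ X) : Prop :=
  φ ≫ counit ▷ X ≫ (λ_ X).hom = X ◁ counit ≫ (ρ_ X).hom

def LamCompat (lam : E ≫ E ⟶ E ≫ E) (ψ : E ≫ X ⟶ X ≫ E) (φ : X ≫ E ⟶ E ≫ X) : Prop :=
  ψ ▷ E ≫ (α_ X E E).hom ≫ X ◁ lam ≫ (α_ X E E).inv ≫ φ ▷ E =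
    (α_ E X E).hom ≫ E ◁ φ ≫ (α_ E E X).inv ≫ lam ▷ X ≫ (α_ E E X).hom ≫ E ◁ ψ ≫
      (α_ E X E).inv

theorem MulCompat.dext' {mul : E ≫ E ⟶ E} {ψX : E ≫ X ⟶ X ≫ E} {ψY : E ≫ Y ⟶ Y ≫ E}
    (hX : MulCompat mul ψX) (hY : MulCompat mul ψY) : MulCompat mul (dext' ψX ψY) := by
  unfold MulCompat at hX hY ⊢
  simp only [Paper.dext']
  calc
    _ = 𝟙 _ ⊗≫ E ◁ ψX ▷ Y ⊗≫ ((E ≫ X) ◁ ψY ≫ ψX ▷ (Y ≫ E)) ⊗≫ X ◁ ψY ▷ E ⊗≫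
          (X ≫ Y) ◁ mul := by bicategory
    _ = 𝟙 _ ⊗≫ E ◁ ψX ▷ Y ⊗≫ (ψX ▷ (E ≫ Y) ≫ (X ≫ E) ◁ ψY) ⊗≫ X ◁ ψY ▷ E ⊗≫
          (X ≫ Y) ◁ mul := by rw [whisker_exchange]
    _ = 𝟙 _ ⊗≫ E ◁ ψX ▷ Y ⊗≫ ψX ▷ (E ≫ Y) ⊗≫
          X ◁ (E ◁ ψY ≫ (α_ E Y E).inv ≫ ψY ▷ E ≫ (α_ Y E E).hom ≫ Y ◁ mul) ⊗≫
          𝟙 _ := by bicategory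
    _ = 𝟙 _ ⊗≫ E ◁ ψX ▷ Y ⊗≫ ψX ▷ (E ≫ Y) ⊗≫
          X ◁ ((α_ E E Y).inv ≫ mul ▷ Y ≫ ψY) ⊗≫ 𝟙 _ := by rw [hY]
    _ = 𝟙 _ ⊗≫ ((E ◁ ψX ≫ (α_ E X E).inv ≫ ψX ▷ E ≫ (α_ X E E).hom ≫ X ◁ mul) ▷ Y)
          ⊗≫ X ◁ ψY ⊗≫ 𝟙 _ := by bicategory
    _ = 𝟙 _ ⊗≫ (((α_ E E X).inv ≫ mul ▷ X ≫ ψX) ▷ Y) ⊗≫ X ◁ ψY ⊗≫ 𝟙 _ := by rw [hX]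
    _ = _ := by bicategory

theorem UnitCompat.dext' {unit : 𝟙 a ⟶ E} {ψX : E ≫ X ⟶ X ≫ E} {ψY : E ≫ Y ⟶ Y ≫ E}
    (hX : UnitCompat unit ψX) (hY : UnitCompat unit ψY) : UnitCompat unit (dext' ψX ψY) := by
  unfold UnitCompat at hX hY ⊢
  simp only [Paper.dext']
  calc
    _ = 𝟙 _ ⊗≫ ((λ_ X).inv ≫ unit ▷ X ≫ ψX) ▷ Y ⊗≫ X ◁ ψY ⊗≫ 𝟙 _ := by bicategory
    _ = 𝟙 _ ⊗≫ ((ρ_ X).inv ≫ X ◁ unit) ▷ Y ⊗≫ X ◁ ψY ⊗≫ 𝟙 _ := by rw [hX]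
    _ = 𝟙 _ ⊗≫ X ◁ ((λ_ Y).inv ≫ unit ▷ Y ≫ ψY) ⊗≫ 𝟙 _ := by bicategory
    _ = 𝟙 _ ⊗≫ X ◁ ((ρ_ Y).inv ≫ Y ◁ unit) ⊗≫ 𝟙 _ := by rw [hY]
    _ = _ := by bicategory

theorem ComulCompat.dext {comul : E ⟶ E ≫ E} {φX : X ≫ E ⟶ E ≫ X} {φY : Y ≫ E ⟶ E ≫ Y}
    (hX : ComulCompat comul φX) (hY : ComulCompat comul φY) :
    ComulCompat comul (dext φX φY) := by
  unfold ComulCompat at hX hY ⊢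
  simp only [Paper.dext]
  calc
    _ = 𝟙 _ ⊗≫ X ◁ Y ◁ comul ⊗≫ X ◁ φY ▷ E ⊗≫
          (φX ▷ (Y ≫ E) ≫ (E ≫ X) ◁ φY) ⊗≫ E ◁ φX ▷ Y ⊗≫ 𝟙 _ := by bicategory
    _ = 𝟙 _ ⊗≫ X ◁ Y ◁ comul ⊗≫ X ◁ φY ▷ E ⊗≫
          ((X ≫ E) ◁ φY ≫ φX ▷ (E ≫ Y)) ⊗≫ E ◁ φX ▷ Y ⊗≫ 𝟙 _ := by
      rw [← whisker_exchange φX φY]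
    _ = 𝟙 _ ⊗≫ X ◁ (Y ◁ comul ≫ (α_ Y E E).inv ≫ φY ▷ E ≫ (α_ E Y E).hom ≫ E ◁ φY)
          ⊗≫ φX ▷ (E ≫ Y) ⊗≫ E ◁ φX ▷ Y ⊗≫ 𝟙 _ := by bicategory
    _ = 𝟙 _ ⊗≫ X ◁ (φY ≫ comul ▷ Y ≫ (α_ E E Y).hom)
          ⊗≫ φX ▷ (E ≫ Y) ⊗≫ E ◁ φX ▷ Y ⊗≫ 𝟙 _ := by rw [hY]
    _ = 𝟙 _ ⊗≫ X ◁ φY ⊗≫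
          ((X ◁ comul ≫ (α_ X E E).inv ≫ φX ▷ E ≫ (α_ E X E).hom ≫ E ◁ φX) ▷ Y)
          ⊗≫ 𝟙 _ := by bicategory
    _ = 𝟙 _ ⊗≫ X ◁ φY ⊗≫ ((φX ≫ comul ▷ X ≫ (α_ E E X).hom) ▷ Y) ⊗≫ 𝟙 _ := by
      rw [hX]
    _ = _ := by bicategory

theorem CounitCompat.dext {counit : E ⟶ 𝟙 a} {φX : X ≫ E ⟶ E ≫ X} {φY : Y ≫ E ⟶ E ≫ Y}
    (hX : CounitCompat counit φX) (hY : CounitCompat counit φY) :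
    CounitCompat counit (dext φX φY) := by
  unfold CounitCompat at hX hY ⊢
  simp only [Paper.dext]
  calc
    _ = 𝟙 _ ⊗≫ X ◁ φY ⊗≫ (φX ≫ counit ▷ X ≫ (λ_ X).hom) ▷ Y ⊗≫ 𝟙 _ := by bicategory
    _ = 𝟙 _ ⊗≫ X ◁ φY ⊗≫ (X ◁ counit ≫ (ρ_ X).hom) ▷ Y ⊗≫ 𝟙 _ := by rw [hX]
    _ = 𝟙 _ ⊗≫ X ◁ (φY ≫ counit ▷ Y ≫ (λ_ Y).hom) ⊗≫ 𝟙 _ := by bicategory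
    _ = 𝟙 _ ⊗≫ X ◁ (Y ◁ counit ≫ (ρ_ Y).hom) ⊗≫ 𝟙 _ := by rw [hY]
    _ = _ := by bicategory

/-- Here both the incoming and the outgoing crossings need the interchange law: `ψX` slides
past `φY`, and `φX` past `ψY`. -/
theorem LamCompat.dext'_dext {lam : E ≫ E ⟶ E ≫ E} {ψX : E ≫ X ⟶ X ≫ E}
    {ψY : E ≫ Y ⟶ Y ≫ E} {φX : X ≫ E ⟶ E ≫ X} {φY : Y ≫ E ⟶ E ≫ Y}
    (hX : LamCompat lam ψX φX) (hY : LamCompat lam ψY φY) :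
    LamCompat lam (dext' ψX ψY) (dext φX φY) := by
  unfold LamCompat at hX hY ⊢
  simp only [Paper.dext, Paper.dext']
  calc
    _ = 𝟙 _ ⊗≫ ψX ▷ (Y ≫ E) ⊗≫
          X ◁ (ψY ▷ E ≫ (α_ Y E E).hom ≫ Y ◁ lam ≫ (α_ Y E E).inv ≫ φY ▷ E) ⊗≫
          φX ▷ (Y ≫ E) ⊗≫ 𝟙 _ := by bicategory
    _ = 𝟙 _ ⊗≫ ψX ▷ (Y ≫ E) ⊗≫
          X ◁ ((α_ E Y E).hom ≫ E ◁ φY ≫ (α_ E E Y).inv ≫ lam ▷ Y ≫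
            (α_ E E Y).hom ≫ E ◁ ψY ≫ (α_ E Y E).inv) ⊗≫
          φX ▷ (Y ≫ E) ⊗≫ 𝟙 _ := by rw [hY]
    _ = 𝟙 _ ⊗≫ (ψX ▷ (Y ≫ E) ≫ (X ≫ E) ◁ φY) ⊗≫ X ◁ lam ▷ Y ⊗≫
          ((X ≫ E) ◁ ψY ≫ φX ▷ (Y ≫ E)) ⊗≫ 𝟙 _ := by bicategory
    _ = 𝟙 _ ⊗≫ ((E ≫ X) ◁ φY ≫ ψX ▷ (E ≫ Y)) ⊗≫ X ◁ lam ▷ Y ⊗≫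
          (φX ▷ (E ≫ Y) ≫ (E ≫ X) ◁ ψY) ⊗≫ 𝟙 _ := by
      rw [← whisker_exchange ψX φY, whisker_exchange φX ψY]
    _ = 𝟙 _ ⊗≫ E ◁ X ◁ φY ⊗≫
          ((ψX ▷ E ≫ (α_ X E E).hom ≫ X ◁ lam ≫ (α_ X E E).inv ≫ φX ▷ E) ▷ Y)
          ⊗≫ (E ≫ X) ◁ ψY ⊗≫ 𝟙 _ := by bicategory
    _ = 𝟙 _ ⊗≫ E ◁ X ◁ φY ⊗≫
          (((α_ E X E).hom ≫ E ◁ φX ≫ (α_ E E X).inv ≫ lam ▷ X ≫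
            (α_ E E X).hom ≫ E ◁ ψX ≫ (α_ E X E).inv) ▷ Y)
          ⊗≫ (E ≫ X) ◁ ψY ⊗≫ 𝟙 _ := by rw [hX]
    _ = _ := by bicategory

variable {M M' N N' : a ⟶ a} (f : M ⟶ M') (g : N ⟶ N')

theorem dext'_naturality {ψM : E ≫ M ⟶ M ≫ E} {ψM' : E ≫ M' ⟶ M' ≫ E}
    {ψN : E ≫ N ⟶ N ≫ E} {ψN' : E ≫ N' ⟶ N' ≫ E}
    (hf : ψM ≫ f ▷ E = E ◁ f ≫ ψM') (hg : ψN ≫ g ▷ E = E ◁ g ≫ ψN') :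
    dext' ψM ψN ≫ (f ▷ N ≫ M' ◁ g) ▷ E = E ◁ (f ▷ N ≫ M' ◁ g) ≫ dext' ψM' ψN' := by
  simp only [dext']
  calc
    _ = 𝟙 _ ⊗≫ ψM ▷ N ⊗≫ (M ◁ ψN ≫ f ▷ (N ≫ E)) ⊗≫ M' ◁ g ▷ E ⊗≫ 𝟙 _ := by
      bicategory
    _ = 𝟙 _ ⊗≫ ψM ▷ N ⊗≫ (f ▷ (E ≫ N) ≫ M' ◁ ψN) ⊗≫ M' ◁ g ▷ E ⊗≫ 𝟙 _ := by
      rw [whisker_exchange f ψN]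
    _ = 𝟙 _ ⊗≫ ((ψM ≫ f ▷ E) ▷ N) ⊗≫ M' ◁ (ψN ≫ g ▷ E) ⊗≫ 𝟙 _ := by bicategory
    _ = 𝟙 _ ⊗≫ ((E ◁ f ≫ ψM') ▷ N) ⊗≫ M' ◁ (E ◁ g ≫ ψN') ⊗≫ 𝟙 _ := by
      rw [hf, hg]
    _ = 𝟙 _ ⊗≫ E ◁ f ▷ N ⊗≫ (ψM' ▷ N ≫ (M' ≫ E) ◁ g) ⊗≫ M' ◁ ψN' ⊗≫ 𝟙 _ := by
      bicategory
    _ = 𝟙 _ ⊗≫ E ◁ f ▷ N ⊗≫ ((E ≫ M') ◁ g ≫ ψM' ▷ N') ⊗≫ M' ◁ ψN' ⊗≫ 𝟙 _ := by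
      rw [← whisker_exchange ψM' g]
    _ = _ := by bicategory

theorem dext_naturality {φM : M ≫ E ⟶ E ≫ M} {φM' : M' ≫ E ⟶ E ≫ M'}
    {φN : N ≫ E ⟶ E ≫ N} {φN' : N' ≫ E ⟶ E ≫ N'}
    (hf : φM ≫ E ◁ f = f ▷ E ≫ φM') (hg : φN ≫ E ◁ g = g ▷ E ≫ φN') :
    dext φM φN ≫ E ◁ (f ▷ N ≫ M' ◁ g) = (f ▷ N ≫ M' ◁ g) ▷ E ≫ dext φM' φN' := by
  simp only [dext]
  calc
    _ = 𝟙 _ ⊗≫ M ◁ φN ⊗≫ ((φM ≫ E ◁ f) ▷ N) ⊗≫ (E ≫ M') ◁ g ⊗≫ 𝟙 _ := by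
      bicategory
    _ = 𝟙 _ ⊗≫ M ◁ φN ⊗≫ ((f ▷ E ≫ φM') ▷ N) ⊗≫ (E ≫ M') ◁ g ⊗≫ 𝟙 _ := by
      rw [hf]
    _ = 𝟙 _ ⊗≫ (M ◁ φN ≫ f ▷ (E ≫ N)) ⊗≫ (φM' ▷ N ≫ (E ≫ M') ◁ g) ⊗≫ 𝟙 _ := by
      bicategory
    _ = 𝟙 _ ⊗≫ (f ▷ (N ≫ E) ≫ M' ◁ φN) ⊗≫ ((M' ≫ E) ◁ g ≫ φM' ▷ N') ⊗≫ 𝟙 _ := by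
      rw [whisker_exchange f φN, ← whisker_exchange φM' g]
    _ = 𝟙 _ ⊗≫ f ▷ (N ≫ E) ⊗≫ M' ◁ (φN ≫ E ◁ g) ⊗≫ φM' ▷ N' ⊗≫ 𝟙 _ := by
      bicategory
    _ = 𝟙 _ ⊗≫ f ▷ (N ≫ E) ⊗≫ M' ◁ (g ▷ E ≫ φN') ⊗≫ φM' ▷ N' ⊗≫ 𝟙 _ := by
      rw [hg]
    _ = _ := by bicategory

end DistributiveLaws

section YetterDrinfeld

variable {F : Bimonad a}

theorem IsYDs.ydTensor {M N : YDData F} (hM : IsYDs F M) (hN : IsYDs F N) :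
    IsYDs F (ydTensor F M N) :=
  ⟨MulCompat.dext' hM.1 hN.1, UnitCompat.dext' hM.2.1 hN.2.1,
    ComulCompat.dext hM.2.2.1 hN.2.2.1, CounitCompat.dext hM.2.2.2.1 hN.2.2.2.1,
    LamCompat.dext'_dext hM.2.2.2.2 hN.2.2.2.2⟩

theorem isYDs_ydUnit (F : Bimonad a) : IsYDs F (ydUnit F) := by
  refine ⟨?_, ?_, ?_, ?_, ?_⟩ <;> · dsimp only [ydUnit]; bicategory

theorem IsYDHom.ydTensor {M M' N N' : YDData F} {f : M.X ⟶ M'.X} {g : N.X ⟶ N'.X}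
    (hf : IsYDHom F M M' f) (hg : IsYDHom F N N' g) :
    IsYDHom F (ydTensor F M N) (ydTensor F M' N') (f ▷ N.X ≫ M'.X ◁ g) :=
  ⟨dext'_naturality f g hf.1 hg.1, dext_naturality f g hf.2 hg.2⟩

theorem isYDHom_associator (M N P : YDData F) :
    IsYDHom F (ydTensor F (ydTensor F M N) P) (ydTensor F M (ydTensor F N P))
      (α_ M.X N.X P.X).hom := by
  constructor <;> · dsimp only [ydTensor, dext, dext']; bicategory

theorem isYDHom_leftUnitor (M : YDData F) :
    IsYDHom F (ydTensor F (ydUnit F) M) M (λ_ M.X).hom := by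
  constructor <;> · dsimp only [ydTensor, ydUnit, dext, dext']; bicategory

theorem isYDHom_rightUnitor (M : YDData F) :
    IsYDHom F (ydTensor F M (ydUnit F)) M (ρ_ M.X).hom := by
  constructor <;> · dsimp only [ydTensor, ydUnit, dext, dext']; bicategory

end YetterDrinfeld

theorem strong_yd_monoidal_general {K : Type*} [Bicategory K]
    {a : K} (F : Bimonad a) :
    (∀ M N : YDData F, IsYDs F M → IsYDs F N → IsYDs F (ydTensor F M N)) ∧
    IsYDs F (ydUnit F) ∧
    -- the tensor product of morphisms is a morphism
    (∀ (M M' N N' : YDData F) (f : M.X ⟶ M'.X) (g : N.X ⟶ N'.X),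
      IsYDs F M → IsYDs F M' → IsYDs F N → IsYDs F N' →
      IsYDHom F M M' f → IsYDHom F N N' g →
      IsYDHom F (ydTensor F M N) (ydTensor F M' N')
        (f ▷ N.X ≫ M'.X ◁ g)) ∧
    -- the coherence 2-cells of `K` are morphisms of Yetter–Drinfel'd modules
    (∀ M N P : YDData F, IsYDs F M → IsYDs F N → IsYDs F P →
      IsYDHom F (ydTensor F (ydTensor F M N) P) (ydTensor F M (ydTensor F N P))
        (α_ M.X N.X P.X).hom) ∧
    (∀ M : YDData F, IsYDs F M →
      IsYDHom F (ydTensor F (ydUnit F) M) M (λ_ M.X).hom ∧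
      IsYDHom F (ydTensor F M (ydUnit F)) M (ρ_ M.X).hom) :=
  ⟨fun _ _ hM hN => hM.ydTensor hN, isYDs_ydUnit F,
    fun _ _ _ _ _ _ _ _ _ _ hf hg => hf.ydTensor hg,
    fun M N P _ _ _ => isYDHom_associator M N P,
    fun M _ => ⟨isYDHom_leftUnitor M, isYDHom_rightUnitor M⟩⟩

/-- Let `(A, F, λ)` be a bimonad in a 2-category `K`.  The
composite of two strong Yetter–Drinfel'd modules, with the stacked distributive
laws, is again a strong Yetter–Drinfel'd module; together with the unit object,
the morphism conditions for the coherence 2-cells and the closure of morphisms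
under tensoring, this makes the category `^F_F YD_s(K,A) = Bimnd(K)(F)` of strong
Yetter–Drinfel'd modules a monoidal category. -/
theorem strong_yd_monoidal {K : Type*} [Bicategory K] [Bicategory.Strict K]
    {a : K} (F : Bimonad a) :
    (∀ M N : YDData F, IsYDs F M → IsYDs F N → IsYDs F (ydTensor F M N)) ∧
    IsYDs F (ydUnit F) ∧
    -- the tensor product of morphisms is a morphism
    (∀ (M M' N N' : YDData F) (f : M.X ⟶ M'.X) (g : N.X ⟶ N'.X),
      IsYDs F M → IsYDs F M' → IsYDs F N → IsYDs F N' →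
      IsYDHom F M M' f → IsYDHom F N N' g →
      IsYDHom F (ydTensor F M N) (ydTensor F M' N')
        (f ▷ N.X ≫ M'.X ◁ g)) ∧
    -- the coherence 2-cells of `K` are morphisms of Yetter–Drinfel'd modules
    (∀ M N P : YDData F, IsYDs F M → IsYDs F N → IsYDs F P →
      IsYDHom F (ydTensor F (ydTensor F M N) P) (ydTensor F M (ydTensor F N P))
        (α_ M.X N.X P.X).hom) ∧
    (∀ M : YDData F, IsYDs F M →
      IsYDHom F (ydTensor F (ydUnit F) M) M (λ_ M.X).hom ∧
      IsYDHom F (ydTensor F M (ydUnit F)) M (ρ_ M.X).hom) :=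
  strong_yd_monoidal_general F

end Paper
end

section
/- Let F be a bimonad and B a monad in K with a 1-cell (F, ψ_{B,F}) in Mnd(K). The monoidal category _{ψ_B}{}^F_F YD_s(K,A) of strong Yetter–Drinfel'd modules equipped with compatible distributive laws ψ_{B,X} acts on the category ^F_B K of left relative (F,B)-modules: (X, M) ↦ X∘M, where X∘M carries the left B-module structure (ν_M lifted through ψ_{B,X}) and left F-comodule structure (l_M lifted through φ_{X,F}); in particular X∘M is again a relative (F,B)-module. -/
/-!
Both structures on `X ∘ M` are lifts along `X`: the action of `B` is moved past `X` by
`ψ_{B,X}` and the coaction of `F` by `φ_{X,F}`. The module axioms of `X ∘ M` then reduce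
to those of `M` together with `(X, ψ_{B,X})` being a 1-cell in `Mnd(K)`, the comodule
axioms to those of `M` together with `(X, φ_{X,F})` being a 1-cell in `Comnd(K)`, and the
relative-module law to that of `M` together with the Yang–Baxter equation for
`ψ_{B,X}`, `φ_{X,F}` and `ψ_{B,F}`. Functoriality is whisker exchange.
-/

open CategoryTheory Bicategory

namespace Paper

variable {K : Type*} [Bicategory K]

variable {a : K}

/-- A left relative `(F,B)`-module in `K`: a left `F`-comodule and left `B`-module
whose structures are compatible through `ψBF`. -/
structure RelMod {a : K} (F : Bimonad a) (B : Mnd a)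
    (ψBF : B.E ≫ F.E ⟶ F.E ≫ B.E) {b : K} (M : a ⟶ b) where
  act : B.E ≫ M ⟶ M
  act_assoc : (α_ B.E B.E M).inv ≫ B.mul ▷ M ≫ act = B.E ◁ act ≫ act
  act_unit : (λ_ M).inv ≫ B.unit ▷ M ≫ act = 𝟙 M
  coact : M ⟶ F.E ≫ M
  coact_coassoc : coact ≫ F.comul ▷ M ≫ (α_ F.E F.E M).hom = coact ≫ F.E ◁ coact
  coact_counit : coact ≫ F.counit ▷ M ≫ (λ_ M).hom = 𝟙 M
  rel : act ≫ coact
      = B.E ◁ coact ≫ (α_ B.E F.E M).inv ≫ ψBF ▷ M ≫ (α_ F.E B.E M).hom ≫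
          F.E ◁ act

section Lift

variable {b : K} {T C X : a ⟶ a} {M N : a ⟶ b}

def liftAct (d : T ≫ X ⟶ X ≫ T) (act : T ≫ M ⟶ M) :
    T ≫ X ≫ M ⟶ X ≫ M :=
  (α_ T X M).inv ≫ d ▷ M ≫ (α_ X T M).hom ≫ X ◁ act

def liftCoact (d : X ≫ C ⟶ C ≫ X) (coact : M ⟶ C ≫ M) :
    X ≫ M ⟶ C ≫ X ≫ M :=
  X ◁ coact ≫ (α_ X C M).inv ≫ d ▷ M ≫ (α_ C X M).hom

theorem liftAct_assoc {m : T ≫ T ⟶ T} {d : T ≫ X ⟶ X ≫ T}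
    (hd : T ◁ d ≫ (α_ T X T).inv ≫ d ▷ T ≫ (α_ X T T).hom ≫ X ◁ m
      = (α_ T T X).inv ≫ m ▷ X ≫ d)
    {act : T ≫ M ⟶ M} (hact : (α_ T T M).inv ≫ m ▷ M ≫ act = T ◁ act ≫ act) :
    (α_ T T (X ≫ M)).inv ≫ m ▷ (X ≫ M) ≫ liftAct d act
      = T ◁ liftAct d act ≫ liftAct d act := by
  unfold liftAct
  calc (α_ T T (X ≫ M)).inv ≫ m ▷ (X ≫ M) ≫ (α_ T X M).inv ≫ d ▷ M ≫
        (α_ X T M).hom ≫ X ◁ act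
      = T ◁ (α_ T X M).inv ≫ (α_ T (T ≫ X) M).inv ≫
          ((α_ T T X).inv ≫ m ▷ X ≫ d) ▷ M ≫ (α_ X T M).hom ≫ X ◁ act := by
        bicategory
    _ = T ◁ (α_ T X M).inv ≫ (α_ T (T ≫ X) M).inv ≫
          (T ◁ d ≫ (α_ T X T).inv ≫ d ▷ T ≫ (α_ X T T).hom ≫ X ◁ m) ▷ M ≫
          (α_ X T M).hom ≫ X ◁ act := by rw [hd]
    _ = T ◁ ((α_ T X M).inv ≫ d ▷ M ≫ (α_ X T M).hom) ≫ (α_ T X (T ≫ M)).inv ≫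
          d ▷ (T ≫ M) ≫ (α_ X T (T ≫ M)).hom ≫
          X ◁ ((α_ T T M).inv ≫ m ▷ M ≫ act) := by bicategory
    _ = T ◁ ((α_ T X M).inv ≫ d ▷ M ≫ (α_ X T M).hom) ≫ (α_ T X (T ≫ M)).inv ≫
          (d ▷ (T ≫ M) ≫ (X ≫ T) ◁ act) ≫ (α_ X T M).hom ≫ X ◁ act := by
        rw [hact]; bicategory
    _ = T ◁ ((α_ T X M).inv ≫ d ▷ M ≫ (α_ X T M).hom ≫ X ◁ act) ≫
          (α_ T X M).inv ≫ d ▷ M ≫ (α_ X T M).hom ≫ X ◁ act := by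
        rw [← whisker_exchange]; bicategory

theorem liftAct_unit {u : 𝟙 a ⟶ T} {d : T ≫ X ⟶ X ≫ T}
    (hd : (λ_ X).inv ≫ u ▷ X ≫ d = (ρ_ X).inv ≫ X ◁ u)
    {act : T ≫ M ⟶ M} (hact : (λ_ M).inv ≫ u ▷ M ≫ act = 𝟙 M) :
    (λ_ (X ≫ M)).inv ≫ u ▷ (X ≫ M) ≫ liftAct d act = 𝟙 (X ≫ M) := by
  unfold liftAct
  calc (λ_ (X ≫ M)).inv ≫ u ▷ (X ≫ M) ≫ (α_ T X M).inv ≫ d ▷ M ≫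
        (α_ X T M).hom ≫ X ◁ act
      = ((λ_ X).inv ≫ u ▷ X ≫ d) ▷ M ≫ (α_ X T M).hom ≫ X ◁ act := by bicategory
    _ = X ◁ ((λ_ M).inv ≫ u ▷ M ≫ act) := by rw [hd]; bicategory
    _ = 𝟙 (X ≫ M) := by rw [hact, whiskerLeft_id]

theorem liftAct_natural {d : T ≫ X ⟶ X ≫ T} {actM : T ≫ M ⟶ M} {actN : T ≫ N ⟶ N}
    {g : M ⟶ N} (hg : actM ≫ g = T ◁ g ≫ actN) :
    liftAct d actM ≫ X ◁ g = T ◁ X ◁ g ≫ liftAct d actN := by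
  unfold liftAct
  calc ((α_ T X M).inv ≫ d ▷ M ≫ (α_ X T M).hom ≫ X ◁ actM) ≫ X ◁ g
      = (α_ T X M).inv ≫ d ▷ M ≫ (α_ X T M).hom ≫ X ◁ (T ◁ g ≫ actN) := by
        rw [← hg]; bicategory
    _ = (α_ T X M).inv ≫ (d ▷ M ≫ (X ≫ T) ◁ g) ≫ (α_ X T N).hom ≫ X ◁ actN := by
        bicategory
    _ = T ◁ X ◁ g ≫ (α_ T X N).inv ≫ d ▷ N ≫ (α_ X T N).hom ≫ X ◁ actN := by
        rw [← whisker_exchange]; bicategory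

theorem liftCoact_coassoc {c : C ⟶ C ≫ C} {d : X ≫ C ⟶ C ≫ X}
    (hd : X ◁ c ≫ (α_ X C C).inv ≫ d ▷ C ≫ (α_ C X C).hom ≫ C ◁ d
      = d ≫ c ▷ X ≫ (α_ C C X).hom)
    {coact : M ⟶ C ≫ M} (hcoact : coact ≫ c ▷ M ≫ (α_ C C M).hom = coact ≫ C ◁ coact) :
    liftCoact d coact ≫ c ▷ (X ≫ M) ≫ (α_ C C (X ≫ M)).hom
      = liftCoact d coact ≫ C ◁ liftCoact d coact := by
  unfold liftCoact
  calc (X ◁ coact ≫ (α_ X C M).inv ≫ d ▷ M ≫ (α_ C X M).hom) ≫ c ▷ (X ≫ M) ≫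
        (α_ C C (X ≫ M)).hom
      = X ◁ coact ≫ (α_ X C M).inv ≫ (d ≫ c ▷ X ≫ (α_ C C X).hom) ▷ M ≫
          (α_ C (C ≫ X) M).hom ≫ C ◁ (α_ C X M).hom := by bicategory
    _ = X ◁ (coact ≫ c ▷ M ≫ (α_ C C M).hom) ≫ (α_ X C (C ≫ M)).inv ≫
          d ▷ (C ≫ M) ≫ (α_ C X (C ≫ M)).hom ≫
          C ◁ ((α_ X C M).inv ≫ d ▷ M ≫ (α_ C X M).hom) := by rw [← hd]; bicategory
    _ = X ◁ coact ≫ (α_ X C M).inv ≫ ((X ≫ C) ◁ coact ≫ d ▷ (C ≫ M)) ≫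
          (α_ C X (C ≫ M)).hom ≫
          C ◁ ((α_ X C M).inv ≫ d ▷ M ≫ (α_ C X M).hom) := by rw [hcoact]; bicategory
    _ = (X ◁ coact ≫ (α_ X C M).inv ≫ d ▷ M ≫ (α_ C X M).hom) ≫
          C ◁ (X ◁ coact ≫ (α_ X C M).inv ≫ d ▷ M ≫ (α_ C X M).hom) := by
        rw [whisker_exchange]; bicategory

theorem liftCoact_counit {e : C ⟶ 𝟙 a} {d : X ≫ C ⟶ C ≫ X}
    (hd : d ≫ e ▷ X ≫ (λ_ X).hom = X ◁ e ≫ (ρ_ X).hom)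
    {coact : M ⟶ C ≫ M} (hcoact : coact ≫ e ▷ M ≫ (λ_ M).hom = 𝟙 M) :
    liftCoact d coact ≫ e ▷ (X ≫ M) ≫ (λ_ (X ≫ M)).hom = 𝟙 (X ≫ M) := by
  unfold liftCoact
  calc (X ◁ coact ≫ (α_ X C M).inv ≫ d ▷ M ≫ (α_ C X M).hom) ≫ e ▷ (X ≫ M) ≫
        (λ_ (X ≫ M)).hom
      = X ◁ coact ≫ (α_ X C M).inv ≫ (d ≫ e ▷ X ≫ (λ_ X).hom) ▷ M := by bicategory
    _ = X ◁ (coact ≫ e ▷ M ≫ (λ_ M).hom) := by rw [hd]; bicategory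
    _ = 𝟙 (X ≫ M) := by rw [hcoact, whiskerLeft_id]

theorem liftCoact_natural {d : X ≫ C ⟶ C ≫ X} {coactM : M ⟶ C ≫ M}
    {coactN : N ⟶ C ≫ N} {g : M ⟶ N} (hg : coactM ≫ C ◁ g = g ≫ coactN) :
    liftCoact d coactM ≫ C ◁ X ◁ g = X ◁ g ≫ liftCoact d coactN := by
  unfold liftCoact
  calc (X ◁ coactM ≫ (α_ X C M).inv ≫ d ▷ M ≫ (α_ C X M).hom) ≫ C ◁ X ◁ g
      = X ◁ coactM ≫ (α_ X C M).inv ≫ (d ▷ M ≫ (C ≫ X) ◁ g) ≫ (α_ C X N).hom := by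
        bicategory
    _ = X ◁ g ≫ X ◁ coactN ≫ (α_ X C N).inv ≫ d ▷ N ≫ (α_ C X N).hom := by
        rw [← whisker_exchange, ← whiskerLeft_comp_assoc, ← hg]; bicategory

theorem liftAct_comp_liftCoact {dT : T ≫ X ⟶ X ≫ T} {dC : X ≫ C ⟶ C ≫ X}
    {ψ : T ≫ C ⟶ C ≫ T}
    (hYB : T ◁ dC ≫ (α_ T C X).inv ≫ ψ ▷ X ≫ (α_ C T X).hom ≫ C ◁ dT
      = (α_ T X C).inv ≫ dT ▷ C ≫ (α_ X T C).hom ≫ X ◁ ψ ≫ (α_ X C T).inv ≫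
          dC ▷ T ≫ (α_ C X T).hom)
    {act : T ≫ M ⟶ M} {coact : M ⟶ C ≫ M}
    (hrel : act ≫ coact
      = T ◁ coact ≫ (α_ T C M).inv ≫ ψ ▷ M ≫ (α_ C T M).hom ≫ C ◁ act) :
    liftAct dT act ≫ liftCoact dC coact
      = T ◁ liftCoact dC coact ≫ (α_ T C (X ≫ M)).inv ≫ ψ ▷ (X ≫ M) ≫
          (α_ C T (X ≫ M)).hom ≫ C ◁ liftAct dT act := by
  unfold liftAct liftCoact
  calc ((α_ T X M).inv ≫ dT ▷ M ≫ (α_ X T M).hom ≫ X ◁ act) ≫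
        X ◁ coact ≫ (α_ X C M).inv ≫ dC ▷ M ≫ (α_ C X M).hom
      = (α_ T X M).inv ≫ dT ▷ M ≫ (α_ X T M).hom ≫
          X ◁ (T ◁ coact ≫ (α_ T C M).inv ≫ ψ ▷ M ≫ (α_ C T M).hom ≫ C ◁ act) ≫
          (α_ X C M).inv ≫ dC ▷ M ≫ (α_ C X M).hom := by rw [← hrel]; bicategory
    _ = (α_ T X M).inv ≫ (dT ▷ M ≫ (X ≫ T) ◁ coact) ≫ (α_ X T (C ≫ M)).hom ≫
          X ◁ ((α_ T C M).inv ≫ ψ ▷ M ≫ (α_ C T M).hom) ≫ (α_ X C (T ≫ M)).inv ≫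
          ((X ≫ C) ◁ act ≫ dC ▷ M) ≫ (α_ C X M).hom := by bicategory
    _ = T ◁ X ◁ coact ≫ T ◁ (α_ X C M).inv ≫ (α_ T (X ≫ C) M).inv ≫
          ((α_ T X C).inv ≫ dT ▷ C ≫ (α_ X T C).hom ≫ X ◁ ψ ≫ (α_ X C T).inv ≫
            dC ▷ T ≫ (α_ C X T).hom) ▷ M ≫
          (α_ C (X ≫ T) M).hom ≫ C ◁ ((α_ X T M).hom ≫ X ◁ act) := by
        rw [← whisker_exchange dT coact, whisker_exchange dC act]; bicategory
    _ = (T ◁ (X ◁ coact ≫ (α_ X C M).inv ≫ dC ▷ M ≫ (α_ C X M).hom)) ≫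
          (α_ T C (X ≫ M)).inv ≫ ψ ▷ (X ≫ M) ≫ (α_ C T (X ≫ M)).hom ≫
          C ◁ ((α_ T X M).inv ≫ dT ▷ M ≫ (α_ X T M).hom ≫ X ◁ act) := by
        rw [← hYB]; bicategory

end Lift

theorem strong_yd_acts_on_relative_modules_general {K : Type*} [Bicategory K]
    {a : K} (F : Bimonad a) (B : Mnd a)
    (ψBF : B.E ≫ F.E ⟶ F.E ≫ B.E)
    -- a strong Yetter–Drinfel'd module with a compatible distributive law `ψBX`
    (M : YDData F) (hM : IsYDs F M) (ψBX : B.E ≫ M.X ⟶ M.X ≫ B.E)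
    (hψBX_mul : B.E ◁ ψBX ≫ (α_ B.E M.X B.E).inv ≫ ψBX ▷ B.E ≫
        (α_ M.X B.E B.E).hom ≫ M.X ◁ B.mul
      = (α_ B.E B.E M.X).inv ≫ B.mul ▷ M.X ≫ ψBX)
    (hψBX_unit : (λ_ M.X).inv ≫ B.unit ▷ M.X ≫ ψBX
      = (ρ_ M.X).inv ≫ M.X ◁ B.unit)
    -- Yang–Baxter equation relating `ψBX`, `φ_{X,F}` and `ψBF`
    (hYB₂ : B.E ◁ M.φ ≫ (α_ B.E F.E M.X).inv ≫ ψBF ▷ M.X ≫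
        (α_ F.E B.E M.X).hom ≫ F.E ◁ ψBX
      = (α_ B.E M.X F.E).inv ≫ ψBX ▷ F.E ≫ (α_ M.X B.E F.E).hom ≫ M.X ◁ ψBF ≫
        (α_ M.X F.E B.E).inv ≫ M.φ ▷ B.E ≫ (α_ F.E M.X B.E).hom) :
    -- `X ∘ M` is again a relative `(F,B)`-module, with the lifted structures …
    (∀ {b : K} (Mm : a ⟶ b) (R : RelMod F B ψBF Mm),
      ∃ R' : RelMod F B ψBF (M.X ≫ Mm),
        R'.act = (α_ B.E M.X Mm).inv ≫ ψBX ▷ Mm ≫ (α_ M.X B.E Mm).hom ≫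
            M.X ◁ R.act ∧
        R'.coact = M.X ◁ R.coact ≫ (α_ M.X F.E Mm).inv ≫ M.φ ▷ Mm ≫
            (α_ F.E M.X Mm).hom) ∧
    -- … and morphisms of relative modules are sent to morphisms.
    (∀ {b : K} (Mm Nm : a ⟶ b) (R : RelMod F B ψBF Mm) (S : RelMod F B ψBF Nm)
        (g : Mm ⟶ Nm), R.act ≫ g = B.E ◁ g ≫ S.act →
        R.coact ≫ F.E ◁ g = g ≫ S.coact →
      (((α_ B.E M.X Mm).inv ≫ ψBX ▷ Mm ≫ (α_ M.X B.E Mm).hom ≫ M.X ◁ R.act) ≫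
          M.X ◁ g
        = B.E ◁ (M.X ◁ g) ≫
            ((α_ B.E M.X Nm).inv ≫ ψBX ▷ Nm ≫ (α_ M.X B.E Nm).hom ≫
              M.X ◁ S.act)) ∧
      ((M.X ◁ R.coact ≫ (α_ M.X F.E Mm).inv ≫ M.φ ▷ Mm ≫ (α_ F.E M.X Mm).hom) ≫
          F.E ◁ (M.X ◁ g)
        = M.X ◁ g ≫
            (M.X ◁ S.coact ≫ (α_ M.X F.E Nm).inv ≫ M.φ ▷ Nm ≫
              (α_ F.E M.X Nm).hom))) := by
  obtain ⟨-, -, hφ_comul, hφ_counit, -⟩ := hM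
  refine ⟨fun Mm R => ⟨{
      act := liftAct ψBX R.act
      act_assoc := liftAct_assoc hψBX_mul R.act_assoc
      act_unit := liftAct_unit hψBX_unit R.act_unit
      coact := liftCoact M.φ R.coact
      coact_coassoc := liftCoact_coassoc hφ_comul R.coact_coassoc
      coact_counit := liftCoact_counit hφ_counit R.coact_counit
      rel := liftAct_comp_liftCoact hYB₂ R.rel }, rfl, rfl⟩, ?_⟩
  intro b Mm Nm R S g hact hcoact
  exact ⟨liftAct_natural hact, liftCoact_natural hcoact⟩

/-- Let `F` be a bimonad and `B` a monad in `K` with a 1-cell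
`(F, ψBF)` in `Mnd(K)`.  The monoidal category of strong Yetter–Drinfel'd modules
equipped with compatible distributive laws `ψ_{B,X}` acts on the category of left
relative `(F,B)`-modules: `(X, M) ↦ X ∘ M`, where `X ∘ M` carries the `B`-module
structure lifted through `ψ_{B,X}` and the `F`-comodule structure lifted through
`φ_{X,F}`.  In particular `X ∘ M` is again a relative `(F,B)`-module, and morphisms
of relative modules are sent to morphisms of relative modules. -/
theorem strong_yd_acts_on_relative_modules {K : Type*} [Bicategory K]
    [Bicategory.Strict K] {a : K} (F : Bimonad a) (B : Mnd a)
    (ψBF : B.E ≫ F.E ⟶ F.E ≫ B.E)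
    (hψBF_mul : B.E ◁ ψBF ≫ (α_ B.E F.E B.E).inv ≫ ψBF ▷ B.E ≫
        (α_ F.E B.E B.E).hom ≫ F.E ◁ B.mul
      = (α_ B.E B.E F.E).inv ≫ B.mul ▷ F.E ≫ ψBF)
    (hψBF_unit : (λ_ F.E).inv ≫ B.unit ▷ F.E ≫ ψBF = (ρ_ F.E).inv ≫ F.E ◁ B.unit)
    -- a strong Yetter–Drinfel'd module with a compatible distributive law `ψBX`
    (M : YDData F) (hM : IsYDs F M) (ψBX : B.E ≫ M.X ⟶ M.X ≫ B.E)
    (hψBX_mul : B.E ◁ ψBX ≫ (α_ B.E M.X B.E).inv ≫ ψBX ▷ B.E ≫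
        (α_ M.X B.E B.E).hom ≫ M.X ◁ B.mul
      = (α_ B.E B.E M.X).inv ≫ B.mul ▷ M.X ≫ ψBX)
    (hψBX_unit : (λ_ M.X).inv ≫ B.unit ▷ M.X ≫ ψBX
      = (ρ_ M.X).inv ≫ M.X ◁ B.unit)
    -- Yang–Baxter equation relating `ψBX`, `ψ_{F,X}` and `ψBF`
    (hYB₁ : B.E ◁ M.ψ ≫ (α_ B.E M.X F.E).inv ≫ ψBX ▷ F.E ≫
        (α_ M.X B.E F.E).hom ≫ M.X ◁ ψBF
      = (α_ B.E F.E M.X).inv ≫ ψBF ▷ M.X ≫ (α_ F.E B.E M.X).hom ≫ F.E ◁ ψBX ≫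
        (α_ F.E M.X B.E).inv ≫ M.ψ ▷ B.E ≫ (α_ M.X F.E B.E).hom)
    -- Yang–Baxter equation relating `ψBX`, `φ_{X,F}` and `ψBF`
    (hYB₂ : B.E ◁ M.φ ≫ (α_ B.E F.E M.X).inv ≫ ψBF ▷ M.X ≫
        (α_ F.E B.E M.X).hom ≫ F.E ◁ ψBX
      = (α_ B.E M.X F.E).inv ≫ ψBX ▷ F.E ≫ (α_ M.X B.E F.E).hom ≫ M.X ◁ ψBF ≫
        (α_ M.X F.E B.E).inv ≫ M.φ ▷ B.E ≫ (α_ F.E M.X B.E).hom) :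
    -- `X ∘ M` is again a relative `(F,B)`-module, with the lifted structures …
    (∀ {b : K} (Mm : a ⟶ b) (R : RelMod F B ψBF Mm),
      ∃ R' : RelMod F B ψBF (M.X ≫ Mm),
        R'.act = (α_ B.E M.X Mm).inv ≫ ψBX ▷ Mm ≫ (α_ M.X B.E Mm).hom ≫
            M.X ◁ R.act ∧
        R'.coact = M.X ◁ R.coact ≫ (α_ M.X F.E Mm).inv ≫ M.φ ▷ Mm ≫
            (α_ F.E M.X Mm).hom) ∧
    -- … and morphisms of relative modules are sent to morphisms.
    (∀ {b : K} (Mm Nm : a ⟶ b) (R : RelMod F B ψBF Mm) (S : RelMod F B ψBF Nm)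
        (g : Mm ⟶ Nm), R.act ≫ g = B.E ◁ g ≫ S.act →
        R.coact ≫ F.E ◁ g = g ≫ S.coact →
      (((α_ B.E M.X Mm).inv ≫ ψBX ▷ Mm ≫ (α_ M.X B.E Mm).hom ≫ M.X ◁ R.act) ≫
          M.X ◁ g
        = B.E ◁ (M.X ◁ g) ≫
            ((α_ B.E M.X Nm).inv ≫ ψBX ▷ Nm ≫ (α_ M.X B.E Nm).hom ≫
              M.X ◁ S.act)) ∧
      ((M.X ◁ R.coact ≫ (α_ M.X F.E Mm).inv ≫ M.φ ▷ Mm ≫ (α_ F.E M.X Mm).hom) ≫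
          F.E ◁ (M.X ◁ g)
        = M.X ◁ g ≫
            (M.X ◁ S.coact ≫ (α_ M.X F.E Nm).inv ≫ M.φ ▷ Nm ≫
              (α_ F.E M.X Nm).hom))) :=
  strong_yd_acts_on_relative_modules_general F B ψBF M hM ψBX hψBX_mul hψBX_unit hYB₂

end Paper
end

section
/- In any braided monoidal category C, every Yetter–Drinfel'd module over a bialgebra H in C is a strong Yetter–Drinfel'd module in the 2-category induced by C (with one 0-cell, objects of C as 1-cells, and morphisms of C as 2-cells), where the distributive laws τ are given by the braiding. -/
/-!
Both `ψ` and `λ` have the shape `(f ⊗ 1)(1 ⊗ c)(Δ ⊗ 1)`, so coassociativity lets `Δ` be pulled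
through them; dually, associativity lets `μ` be pulled through `φ` and `λ`. On the left-hand
side this exposes `ψφ`, which the Yetter–Drinfel'd condition (once the unit and counit laws
remove `η` and `ε`) replaces by `(1 ⊗ ν)(λ ⊗ 1)(1 ⊗ l)`; on the right-hand side it exposes a
single `λ`. Naturality of the braiding, the hexagon identities and Yang–Baxter then bring both
sides to the same string diagram.
-/

open CategoryTheory Category MonoidalCategory

namespace Paper

variable {C : Type*} [Category C] [MonoidalCategory C] [BraidedCategory C]

/-- The distributive law `λ = (μ ⊗ id) ∘ (id ⊗ c_{H,H}) ∘ (Δ ⊗ id)` of the bimonad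
induced by a bialgebra `H` in a braided category. -/
def bialgLam (H : C) (mul : H ⊗ H ⟶ H) (comul : H ⟶ H ⊗ H) : H ⊗ H ⟶ H ⊗ H :=
  comul ▷ H ≫ (α_ H H H).hom ≫ H ◁ (β_ H H).hom ≫ (α_ H H H).inv ≫ mul ▷ H

/-- `ψ = (ν ⊗ id) ∘ (id ⊗ c_{H,X}) ∘ (Δ ⊗ id)`. -/
def ydPsi (H X : C) (comul : H ⟶ H ⊗ H) (ν : H ⊗ X ⟶ X) : H ⊗ X ⟶ X ⊗ H :=
  comul ▷ X ≫ (α_ H H X).hom ≫ H ◁ (β_ H X).hom ≫ (α_ H X H).inv ≫ ν ▷ H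

/-- `φ = (μ ⊗ id) ∘ (id ⊗ c_{X,H}) ∘ (l ⊗ id)`. -/
def ydPhi (H X : C) (mul : H ⊗ H ⟶ H) (l : X ⟶ H ⊗ X) : X ⊗ H ⟶ H ⊗ X :=
  l ▷ H ≫ (α_ H X H).hom ≫ H ◁ (β_ X H).hom ≫ (α_ H H X).inv ≫ mul ▷ X

open BraidedCategory

section

variable {H : C}

theorem ydPsi_whiskerLeft_comul {comul : H ⟶ H ⊗ H}
    (h_coassoc : comul ≫ comul ▷ H ≫ (α_ H H H).hom = comul ≫ H ◁ comul)
    {M : C} (f : H ⊗ M ⟶ M) :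
    ydPsi H M comul f ≫ M ◁ comul =
      comul ▷ M ≫ (α_ H H M).hom ≫ H ◁ (β_ H M).hom ≫ (α_ H M H).inv ≫
        ydPsi H M comul f ▷ H ≫ (α_ M H H).hom := by
  calc ydPsi H M comul f ≫ M ◁ comul
      = 𝟙 _ ⊗≫ comul ▷ M ⊗≫ H ◁ (β_ H M).hom ⊗≫ (f ▷ H ≫ M ◁ comul) ⊗≫ 𝟙 _ := by
        simp only [ydPsi]; monoidal
    _ = 𝟙 _ ⊗≫ comul ▷ M ⊗≫ H ◁ ((β_ H M).hom ≫ M ◁ comul) ⊗≫ f ▷ (H ⊗ H) ⊗≫ 𝟙 _ := by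
        rw [← whisker_exchange]; monoidal
    _ = 𝟙 _ ⊗≫ (comul ≫ comul ▷ H ≫ (α_ H H H).hom) ▷ M ⊗≫ H ◁ (β_ (H ⊗ H) M).hom ⊗≫
          f ▷ (H ⊗ H) ⊗≫ 𝟙 _ := by
        rw [← braiding_naturality_left, h_coassoc]; monoidal
    _ = 𝟙 _ ⊗≫ comul ▷ M ⊗≫ (H ◁ (β_ H M).hom ≫ comul ▷ (M ⊗ H)) ⊗≫
          H ◁ (β_ H M).hom ▷ H ⊗≫ f ▷ H ▷ H ⊗≫ 𝟙 _ := by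
        rw [braiding_tensor_left_hom, whisker_exchange]; monoidal
    _ = _ := by simp only [ydPsi]; monoidal

theorem whiskerLeft_mul_ydPhi {mul : H ⊗ H ⟶ H}
    (h_assoc : (α_ H H H).inv ≫ mul ▷ H ≫ mul = H ◁ mul ≫ mul)
    {M : C} (g : M ⟶ H ⊗ M) :
    M ◁ mul ≫ ydPhi H M mul g =
      (α_ M H H).inv ≫ ydPhi H M mul g ▷ H ≫ (α_ H M H).hom ≫ H ◁ (β_ M H).hom ≫
        (α_ H H M).inv ≫ mul ▷ M := by
  calc M ◁ mul ≫ ydPhi H M mul g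
      = 𝟙 _ ⊗≫ (M ◁ mul ≫ g ▷ H) ⊗≫ H ◁ (β_ M H).hom ⊗≫ mul ▷ M ⊗≫ 𝟙 _ := by
        simp only [ydPhi]; monoidal
    _ = 𝟙 _ ⊗≫ g ▷ (H ⊗ H) ⊗≫ H ◁ (M ◁ mul ≫ (β_ M H).hom) ⊗≫ mul ▷ M ⊗≫ 𝟙 _ := by
        rw [whisker_exchange]; monoidal
    _ = 𝟙 _ ⊗≫ g ▷ (H ⊗ H) ⊗≫ H ◁ (β_ M (H ⊗ H)).hom ⊗≫
          ((α_ H H H).inv ≫ mul ▷ H ≫ mul) ▷ M ⊗≫ 𝟙 _ := by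
        rw [braiding_naturality_right, h_assoc]; monoidal
    _ = 𝟙 _ ⊗≫ g ▷ (H ⊗ H) ⊗≫ H ◁ (β_ M H).hom ▷ H ⊗≫
          (mul ▷ (M ⊗ H) ≫ H ◁ (β_ M H).hom) ⊗≫ mul ▷ M ⊗≫ 𝟙 _ := by
        rw [braiding_tensor_right_hom, ← whisker_exchange]; monoidal
    _ = _ := by simp only [ydPhi]; monoidal

-- `λ` is `ψ` for the regular action of `H` on itself, and `φ` for its regular coaction.
theorem bialgLam_whiskerLeft_comul {mul : H ⊗ H ⟶ H} {comul : H ⟶ H ⊗ H}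
    (h_coassoc : comul ≫ comul ▷ H ≫ (α_ H H H).hom = comul ≫ H ◁ comul) :
    bialgLam H mul comul ≫ H ◁ comul =
      comul ▷ H ≫ (α_ H H H).hom ≫ H ◁ (β_ H H).hom ≫ (α_ H H H).inv ≫
        bialgLam H mul comul ▷ H ≫ (α_ H H H).hom :=
  ydPsi_whiskerLeft_comul h_coassoc mul

theorem whiskerLeft_mul_bialgLam {mul : H ⊗ H ⟶ H} {comul : H ⟶ H ⊗ H}
    (h_assoc : (α_ H H H).inv ≫ mul ▷ H ≫ mul = H ◁ mul ≫ mul) :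
    H ◁ mul ≫ bialgLam H mul comul =
      (α_ H H H).inv ≫ bialgLam H mul comul ▷ H ≫ (α_ H H H).hom ≫
        H ◁ (β_ H H).hom ≫ (α_ H H H).inv ≫ mul ▷ H :=
  whiskerLeft_mul_ydPhi h_assoc comul

theorem rightUnitor_inv_whiskerLeft_unit_bialgLam {mul : H ⊗ H ⟶ H} {unit : 𝟙_ C ⟶ H}
    (h_ru : (ρ_ H).inv ≫ H ◁ unit ≫ mul = 𝟙 H) (comul : H ⟶ H ⊗ H) :
    (ρ_ H).inv ≫ H ◁ unit ≫ bialgLam H mul comul = comul := by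
  calc (ρ_ H).inv ≫ H ◁ unit ≫ bialgLam H mul comul
      = 𝟙 H ⊗≫ (H ◁ unit ≫ comul ▷ H) ⊗≫ H ◁ (β_ H H).hom ⊗≫ mul ▷ H ⊗≫ 𝟙 _ := by
        simp only [bialgLam]; monoidal
    _ = 𝟙 H ⊗≫ comul ⊗≫ H ◁ (H ◁ unit ≫ (β_ H H).hom) ⊗≫ mul ▷ H ⊗≫ 𝟙 _ := by
        rw [whisker_exchange]; monoidal
    _ = comul ≫ ((ρ_ H).inv ≫ H ◁ unit ≫ mul) ▷ H := by
        rw [braiding_naturality_right, braiding_tensorUnit_right]; monoidal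
    _ = comul := by rw [h_ru]; simp

theorem ydPsi_comp_ydPhi {mul : H ⊗ H ⟶ H} {unit : 𝟙_ C ⟶ H}
    {comul : H ⟶ H ⊗ H} {counit : H ⟶ 𝟙_ C}
    (h_ru : (ρ_ H).inv ≫ H ◁ unit ≫ mul = 𝟙 H)
    (h_rcu : comul ≫ H ◁ counit ≫ (ρ_ H).hom = 𝟙 H)
    {X : C} {ν : H ⊗ X ⟶ X} {l : X ⟶ H ⊗ X}
    (hYD : ydPsi H X comul ν ≫ (ρ_ (X ⊗ H)).inv ≫ (X ⊗ H) ◁ unit ≫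
        (α_ X H H).hom ≫ X ◁ bialgLam H mul comul ≫ (α_ X H H).inv ≫
        ydPhi H X mul l ▷ H ≫ (α_ H X H).hom ≫ H ◁ (X ◁ counit ≫ (ρ_ X).hom)
      = H ◁ l ≫ (α_ H H X).inv ≫ bialgLam H mul comul ▷ X ≫ (α_ H H X).hom ≫
          H ◁ ν) :
    ydPsi H X comul ν ≫ ydPhi H X mul l
      = H ◁ l ≫ (α_ H H X).inv ≫ bialgLam H mul comul ▷ X ≫ (α_ H H X).hom ≫
          H ◁ ν := by
  rw [← hYD]
  calc ydPsi H X comul ν ≫ ydPhi H X mul l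
      = ydPsi H X comul ν ≫ X ◁ (comul ≫ H ◁ counit ≫ (ρ_ H).hom) ≫
          ydPhi H X mul l := by
        rw [h_rcu, MonoidalCategory.whiskerLeft_id, id_comp]
    _ = 𝟙 _ ⊗≫ ydPsi H X comul ν ≫ X ◁ comul ⊗≫
          (ydPhi H X mul l ▷ H ≫ (H ⊗ X) ◁ counit) ⊗≫ 𝟙 _ := by
        rw [← whisker_exchange]; monoidal
    _ = 𝟙 _ ⊗≫ ydPsi H X comul ν ≫ X ◁ ((ρ_ H).inv ≫ H ◁ unit ≫ bialgLam H mul comul) ⊗≫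
          (ydPhi H X mul l ▷ H ≫ (H ⊗ X) ◁ counit) ⊗≫ 𝟙 _ := by
        rw [rightUnitor_inv_whiskerLeft_unit_bialgLam h_ru]
    _ = _ := by monoidal

theorem ydPsi_bialgLam_ydPhi_eq_comp {mul : H ⊗ H ⟶ H} {comul : H ⟶ H ⊗ H}
    (h_assoc : (α_ H H H).inv ≫ mul ▷ H ≫ mul = H ◁ mul ≫ mul)
    (h_coassoc : comul ≫ comul ▷ H ≫ (α_ H H H).hom = comul ≫ H ◁ comul)
    {X : C} (ν : H ⊗ X ⟶ X) (l : X ⟶ H ⊗ X) :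
    ydPsi H X comul ν ▷ H ≫ (α_ X H H).hom ≫ X ◁ bialgLam H mul comul ≫
        (α_ X H H).inv ≫ ydPhi H X mul l ▷ H
      = comul ▷ X ▷ H ⊗≫ H ◁ (β_ H X).hom ▷ H ⊗≫
          (ydPsi H X comul ν ≫ ydPhi H X mul l) ▷ H ▷ H ⊗≫
          (H ⊗ X) ◁ (β_ H H).hom ⊗≫ H ◁ (β_ X H).hom ▷ H ⊗≫ mul ▷ X ▷ H := by
  calc _
      = 𝟙 _ ⊗≫ (ydPsi H X comul ν ≫ X ◁ comul) ▷ H ⊗≫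
          (X ⊗ H) ◁ (β_ H H).hom ⊗≫ X ◁ mul ▷ H ⊗≫ ydPhi H X mul l ▷ H ⊗≫ 𝟙 _ := by
        simp only [bialgLam]; monoidal
    _ = 𝟙 _ ⊗≫ comul ▷ X ▷ H ⊗≫ H ◁ (β_ H X).hom ▷ H ⊗≫
          ydPsi H X comul ν ▷ H ▷ H ⊗≫ (X ⊗ H) ◁ (β_ H H).hom ⊗≫
          (X ◁ mul ≫ ydPhi H X mul l) ▷ H ⊗≫ 𝟙 _ := by
        rw [ydPsi_whiskerLeft_comul h_coassoc]; monoidal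
    _ = 𝟙 _ ⊗≫ comul ▷ X ▷ H ⊗≫ H ◁ (β_ H X).hom ▷ H ⊗≫
          ydPsi H X comul ν ▷ H ▷ H ⊗≫
          ((X ⊗ H) ◁ (β_ H H).hom ≫ ydPhi H X mul l ▷ (H ⊗ H)) ⊗≫
          H ◁ (β_ X H).hom ▷ H ⊗≫ mul ▷ X ▷ H ⊗≫ 𝟙 _ := by
        rw [whiskerLeft_mul_ydPhi h_assoc]; monoidal
    _ = _ := by
        rw [whisker_exchange]; monoidal

def strongYDNormalForm {X : C} (comul : H ⟶ H ⊗ H) (mul : H ⊗ H ⟶ H)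
    (Λ : H ⊗ H ⟶ H ⊗ H) (l : X ⟶ H ⊗ X) (ν : H ⊗ X ⟶ X) :
    (H ⊗ X) ⊗ H ⟶ (H ⊗ X) ⊗ H :=
  comul ▷ X ▷ H ⊗≫ (H ⊗ H) ◁ l ▷ H ⊗≫ H ◁ (β_ H H).hom ▷ X ▷ H ⊗≫
    (H ⊗ H ⊗ H) ◁ (β_ X H).hom ⊗≫ (H ⊗ H) ◁ (β_ H H).hom ▷ X ⊗≫
    Λ ▷ H ▷ H ▷ X ⊗≫ H ◁ (β_ H H).hom ▷ H ▷ X ⊗≫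
    (H ⊗ H ⊗ H) ◁ (β_ H X).hom ⊗≫ (H ⊗ H) ◁ ν ▷ H ⊗≫ mul ▷ X ▷ H

theorem comul_coaction_action_mul_eq_strongYDNormalForm {X : C} (comul : H ⟶ H ⊗ H)
    (mul : H ⊗ H ⟶ H) (Λ : H ⊗ H ⟶ H ⊗ H) (l : X ⟶ H ⊗ X) (ν : H ⊗ X ⟶ X) :
    comul ▷ X ▷ H ⊗≫ H ◁ (β_ H X).hom ▷ H ⊗≫
        (H ◁ l ≫ (α_ H H X).inv ≫ Λ ▷ X ≫ (α_ H H X).hom ≫ H ◁ ν) ▷ H ▷ H ⊗≫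
        (H ⊗ X) ◁ (β_ H H).hom ⊗≫ H ◁ (β_ X H).hom ▷ H ⊗≫ mul ▷ X ▷ H
      = strongYDNormalForm comul mul Λ l ν := by
  calc _
      = 𝟙 _ ⊗≫ comul ▷ X ▷ H ⊗≫ H ◁ ((β_ H X).hom ≫ l ▷ H) ▷ H ⊗≫ Λ ▷ X ▷ H ▷ H ⊗≫
          H ◁ ν ▷ H ▷ H ⊗≫ (H ⊗ X) ◁ (β_ H H).hom ⊗≫ H ◁ (β_ X H).hom ▷ H ⊗≫
          mul ▷ X ▷ H ⊗≫ 𝟙 _ := by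
        monoidal
    _ = 𝟙 _ ⊗≫ comul ▷ X ▷ H ⊗≫ (H ⊗ H) ◁ l ▷ H ⊗≫ H ◁ (β_ H H).hom ▷ X ▷ H ⊗≫
          ((H ⊗ H) ◁ ((β_ H X).hom ▷ H) ≫ Λ ▷ ((X ⊗ H) ⊗ H)) ⊗≫
          H ◁ ν ▷ H ▷ H ⊗≫ (H ⊗ X) ◁ (β_ H H).hom ⊗≫
          H ◁ (β_ X H).hom ▷ H ⊗≫ mul ▷ X ▷ H ⊗≫ 𝟙 _ := by
        rw [← braiding_naturality_right, braiding_tensor_right_hom]; monoidal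
    _ = 𝟙 _ ⊗≫ comul ▷ X ▷ H ⊗≫ (H ⊗ H) ◁ l ▷ H ⊗≫ H ◁ (β_ H H).hom ▷ X ▷ H ⊗≫
          Λ ▷ H ▷ X ▷ H ⊗≫ (H ⊗ H) ◁ (β_ H X).hom ▷ H ⊗≫
          H ◁ (ν ▷ (H ⊗ H) ≫ X ◁ (β_ H H).hom) ⊗≫
          H ◁ (β_ X H).hom ▷ H ⊗≫ mul ▷ X ▷ H ⊗≫ 𝟙 _ := by
        rw [whisker_exchange]; monoidal
    _ = 𝟙 _ ⊗≫ comul ▷ X ▷ H ⊗≫ (H ⊗ H) ◁ l ▷ H ⊗≫ H ◁ (β_ H H).hom ▷ X ▷ H ⊗≫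
          Λ ▷ H ▷ X ▷ H ⊗≫ (H ⊗ H) ◁ (β_ H X).hom ▷ H ⊗≫ (H ⊗ H ⊗ X) ◁ (β_ H H).hom ⊗≫
          H ◁ ((ν ▷ H ≫ (β_ X H).hom) ▷ H) ⊗≫ mul ▷ X ▷ H ⊗≫ 𝟙 _ := by
        rw [← whisker_exchange]; monoidal
    _ = 𝟙 _ ⊗≫ comul ▷ X ▷ H ⊗≫ (H ⊗ H) ◁ l ▷ H ⊗≫ H ◁ (β_ H H).hom ▷ X ▷ H ⊗≫
          Λ ▷ H ▷ X ▷ H ⊗≫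
          (H ⊗ H) ◁ ((β_ H X).hom ▷ H ⊗≫ X ◁ (β_ H H).hom ⊗≫ (β_ X H).hom ▷ H) ⊗≫
          H ◁ (β_ H H).hom ▷ X ▷ H ⊗≫ (H ⊗ H) ◁ ν ▷ H ⊗≫ mul ▷ X ▷ H ⊗≫ 𝟙 _ := by
        rw [braiding_naturality_left, braiding_tensor_left_hom]; monoidal
    _ = 𝟙 _ ⊗≫ comul ▷ X ▷ H ⊗≫ (H ⊗ H) ◁ l ▷ H ⊗≫ H ◁ (β_ H H).hom ▷ X ▷ H ⊗≫
          Λ ▷ H ▷ X ▷ H ⊗≫ (H ⊗ H ⊗ H) ◁ (β_ X H).hom ⊗≫ (H ⊗ H) ◁ (β_ H H).hom ▷ X ⊗≫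
          ((H ⊗ (H ⊗ H)) ◁ (β_ H X).hom ≫ (H ◁ (β_ H H).hom) ▷ (X ⊗ H)) ⊗≫
          (H ⊗ H) ◁ ν ▷ H ⊗≫ mul ▷ X ▷ H ⊗≫ 𝟙 _ := by
        rw [yang_baxter']; monoidal
    _ = 𝟙 _ ⊗≫ comul ▷ X ▷ H ⊗≫ (H ⊗ H) ◁ l ▷ H ⊗≫ H ◁ (β_ H H).hom ▷ X ▷ H ⊗≫
          (Λ ▷ (H ⊗ (X ⊗ H)) ≫ (H ⊗ H) ◁ (H ◁ (β_ X H).hom ⊗≫ (β_ H H).hom ▷ X)) ⊗≫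
          H ◁ (β_ H H).hom ▷ H ▷ X ⊗≫ (H ⊗ H ⊗ H) ◁ (β_ H X).hom ⊗≫
          (H ⊗ H) ◁ ν ▷ H ⊗≫ mul ▷ X ▷ H ⊗≫ 𝟙 _ := by
        rw [whisker_exchange (H ◁ (β_ H H).hom) (β_ H X).hom]; monoidal
    _ = _ := by
        rw [← whisker_exchange]; simp only [strongYDNormalForm]; monoidal

theorem ydPhi_bialgLam_ydPsi_eq_strongYDNormalForm {mul : H ⊗ H ⟶ H} {comul : H ⟶ H ⊗ H}
    (h_assoc : (α_ H H H).inv ≫ mul ▷ H ≫ mul = H ◁ mul ≫ mul)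
    (h_coassoc : comul ≫ comul ▷ H ≫ (α_ H H H).hom = comul ≫ H ◁ comul)
    {X : C} (ν : H ⊗ X ⟶ X) (l : X ⟶ H ⊗ X) :
    (α_ H X H).hom ≫ H ◁ ydPhi H X mul l ≫ (α_ H H X).inv ≫
        bialgLam H mul comul ▷ X ≫ (α_ H H X).hom ≫ H ◁ ydPsi H X comul ν ≫
        (α_ H X H).inv
      = strongYDNormalForm comul mul (bialgLam H mul comul) l ν := by
  calc _
      = 𝟙 _ ⊗≫ H ◁ ydPhi H X mul l ⊗≫ (bialgLam H mul comul ≫ H ◁ comul) ▷ X ⊗≫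
          (H ⊗ H) ◁ (β_ H X).hom ⊗≫ H ◁ ν ▷ H ⊗≫ 𝟙 _ := by
        simp only [ydPsi]; monoidal
    _ = 𝟙 _ ⊗≫ (H ◁ ydPhi H X mul l ≫ comul ▷ (H ⊗ X)) ⊗≫
          H ◁ (β_ H H).hom ▷ X ⊗≫ bialgLam H mul comul ▷ H ▷ X ⊗≫
          (H ⊗ H) ◁ (β_ H X).hom ⊗≫ H ◁ ν ▷ H ⊗≫ 𝟙 _ := by
        rw [bialgLam_whiskerLeft_comul h_coassoc]; monoidal
    _ = 𝟙 _ ⊗≫ comul ▷ (X ⊗ H) ⊗≫ (H ⊗ H) ◁ l ▷ H ⊗≫ (H ⊗ H ⊗ H) ◁ (β_ X H).hom ⊗≫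
          H ◁ ((H ◁ mul ≫ (β_ H H).hom) ▷ X) ⊗≫ bialgLam H mul comul ▷ H ▷ X ⊗≫
          (H ⊗ H) ◁ (β_ H X).hom ⊗≫ H ◁ ν ▷ H ⊗≫ 𝟙 _ := by
        rw [whisker_exchange]; simp only [ydPhi]; monoidal
    _ = 𝟙 _ ⊗≫ comul ▷ (X ⊗ H) ⊗≫ (H ⊗ H) ◁ l ▷ H ⊗≫
          (H ⊗ H ⊗ H) ◁ (β_ X H).hom ⊗≫ H ◁ (β_ H H).hom ▷ H ▷ X ⊗≫
          (H ⊗ H) ◁ (β_ H H).hom ▷ X ⊗≫ (H ◁ mul ≫ bialgLam H mul comul) ▷ H ▷ X ⊗≫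
          (H ⊗ H) ◁ (β_ H X).hom ⊗≫ H ◁ ν ▷ H ⊗≫ 𝟙 _ := by
        rw [braiding_naturality_right, braiding_tensor_right_hom]; monoidal
    _ = 𝟙 _ ⊗≫ comul ▷ (X ⊗ H) ⊗≫ (H ⊗ H) ◁ l ▷ H ⊗≫
          ((H ⊗ H ⊗ H) ◁ (β_ X H).hom ≫ (H ◁ (β_ H H).hom) ▷ (H ⊗ X)) ⊗≫
          (H ⊗ H) ◁ (β_ H H).hom ▷ X ⊗≫
          bialgLam H mul comul ▷ H ▷ H ▷ X ⊗≫ H ◁ (β_ H H).hom ▷ H ▷ X ⊗≫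
          (mul ▷ (H ⊗ (H ⊗ X)) ≫ H ◁ (H ◁ (β_ H X).hom ⊗≫ ν ▷ H)) ⊗≫ 𝟙 _ := by
        rw [whiskerLeft_mul_bialgLam h_assoc]; monoidal
    _ = _ := by
        rw [whisker_exchange (H ◁ (β_ H H).hom) (β_ X H).hom, ← whisker_exchange mul]
        simp only [strongYDNormalForm]; monoidal

end

theorem yd_module_in_braided_category_is_strong_general
    (H : C) (mul : H ⊗ H ⟶ H) (unit : 𝟙_ C ⟶ H)
    (comul : H ⟶ H ⊗ H) (counit : H ⟶ 𝟙_ C)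
    -- `H` is a monoid
    (h_assoc : (α_ H H H).inv ≫ mul ▷ H ≫ mul = H ◁ mul ≫ mul)
    (h_ru : (ρ_ H).inv ≫ H ◁ unit ≫ mul = 𝟙 H)
    -- `H` is a comonoid
    (h_coassoc : comul ≫ comul ▷ H ≫ (α_ H H H).hom = comul ≫ H ◁ comul)
    (h_rcu : comul ≫ H ◁ counit ≫ (ρ_ H).hom = 𝟙 H)
    -- a Yetter–Drinfel'd module `X`
    (X : C) (ν : H ⊗ X ⟶ X) (l : X ⟶ H ⊗ X)
    -- the (two-strand) Yetter–Drinfel'd compatibility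
    (hYD : ydPsi H X comul ν ≫ (ρ_ (X ⊗ H)).inv ≫ (X ⊗ H) ◁ unit ≫
        (α_ X H H).hom ≫ X ◁ bialgLam H mul comul ≫ (α_ X H H).inv ≫
        ydPhi H X mul l ▷ H ≫ (α_ H X H).hom ≫ H ◁ (X ◁ counit ≫ (ρ_ X).hom)
      = H ◁ l ≫ (α_ H H X).inv ≫ bialgLam H mul comul ▷ X ≫ (α_ H H X).hom ≫
          H ◁ ν) :
    -- the strong (three-strand) compatibility
    ydPsi H X comul ν ▷ H ≫ (α_ X H H).hom ≫ X ◁ bialgLam H mul comul ≫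
        (α_ X H H).inv ≫ ydPhi H X mul l ▷ H
      = (α_ H X H).hom ≫ H ◁ ydPhi H X mul l ≫ (α_ H H X).inv ≫
          bialgLam H mul comul ▷ X ≫ (α_ H H X).hom ≫ H ◁ ydPsi H X comul ν ≫
          (α_ H X H).inv := by
  rw [ydPsi_bialgLam_ydPhi_eq_comp h_assoc h_coassoc, ydPsi_comp_ydPhi h_ru h_rcu hYD,
    comul_coaction_action_mul_eq_strongYDNormalForm,
    ydPhi_bialgLam_ydPsi_eq_strongYDNormalForm h_assoc h_coassoc]

/-- In a braided monoidal category `C`, every Yetter–Drinfel'd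
module over a bialgebra `H` in `C` is a *strong* Yetter–Drinfel'd module in the
2-category induced by `C`, where the distributive laws are given by the braiding:
the three-strand compatibility between `ψ`, `λ` and `φ` holds. -/
theorem yd_module_in_braided_category_is_strong
    (H : C) (mul : H ⊗ H ⟶ H) (unit : 𝟙_ C ⟶ H)
    (comul : H ⟶ H ⊗ H) (counit : H ⟶ 𝟙_ C)
    -- `H` is a monoid
    (h_assoc : (α_ H H H).inv ≫ mul ▷ H ≫ mul = H ◁ mul ≫ mul)
    (h_lu : (λ_ H).inv ≫ unit ▷ H ≫ mul = 𝟙 H)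
    (h_ru : (ρ_ H).inv ≫ H ◁ unit ≫ mul = 𝟙 H)
    -- `H` is a comonoid
    (h_coassoc : comul ≫ comul ▷ H ≫ (α_ H H H).hom = comul ≫ H ◁ comul)
    (h_lcu : comul ≫ counit ▷ H ≫ (λ_ H).hom = 𝟙 H)
    (h_rcu : comul ≫ H ◁ counit ≫ (ρ_ H).hom = 𝟙 H)
    -- bialgebra compatibilities (with respect to the braiding)
    (h_mul_comul : mul ≫ comul
      = (comul ⊗ₘ comul) ≫ (α_ H H (H ⊗ H)).hom ≫
          H ◁ ((α_ H H H).inv ≫ (β_ H H).hom ▷ H ≫ (α_ H H H).hom) ≫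
          (α_ H H (H ⊗ H)).inv ≫ (mul ⊗ₘ mul))
    (h_comul_unit : unit ≫ comul = (λ_ (𝟙_ C)).inv ≫ (unit ⊗ₘ unit))
    (h_counit_mul : mul ≫ counit = (counit ⊗ₘ counit) ≫ (λ_ (𝟙_ C)).hom)
    (h_counit_unit : unit ≫ counit = 𝟙 (𝟙_ C))
    -- a Yetter–Drinfel'd module `X`
    (X : C) (ν : H ⊗ X ⟶ X) (l : X ⟶ H ⊗ X)
    (hν_assoc : (α_ H H X).inv ≫ mul ▷ X ≫ ν = H ◁ ν ≫ ν)
    (hν_unit : (λ_ X).inv ≫ unit ▷ X ≫ ν = 𝟙 X)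
    (hl_coassoc : l ≫ comul ▷ X ≫ (α_ H H X).hom = l ≫ H ◁ l)
    (hl_counit : l ≫ counit ▷ X ≫ (λ_ X).hom = 𝟙 X)
    -- the (two-strand) Yetter–Drinfel'd compatibility
    (hYD : ydPsi H X comul ν ≫ (ρ_ (X ⊗ H)).inv ≫ (X ⊗ H) ◁ unit ≫
        (α_ X H H).hom ≫ X ◁ bialgLam H mul comul ≫ (α_ X H H).inv ≫
        ydPhi H X mul l ▷ H ≫ (α_ H X H).hom ≫ H ◁ (X ◁ counit ≫ (ρ_ X).hom)
      = H ◁ l ≫ (α_ H H X).inv ≫ bialgLam H mul comul ▷ X ≫ (α_ H H X).hom ≫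
          H ◁ ν) :
    -- the strong (three-strand) compatibility
    ydPsi H X comul ν ▷ H ≫ (α_ X H H).hom ≫ X ◁ bialgLam H mul comul ≫
        (α_ X H H).inv ≫ ydPhi H X mul l ▷ H
      = (α_ H X H).hom ≫ H ◁ ydPhi H X mul l ≫ (α_ H H X).inv ≫
          bialgLam H mul comul ▷ X ≫ (α_ H H X).hom ≫ H ◁ ydPsi H X comul ν ≫
          (α_ H X H).inv :=
  yd_module_in_braided_category_is_strong_general H mul unit comul counit h_assoc h_ru h_coassoc
    h_rcu X ν l hYD

end Paper
end
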